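/- arXiv:1202.2603 — 7 statements merged into one kernel-verified Lean document; each statement's English description precedes it below -/
import Mathlib

section
/- Let p be an odd prime and r ≥ 1. The number of residues t ∈ Z/p^rZ such that t² − 4 is a quadratic residue mod p (i.e., (T/p) = 1 where T = t² − 4) equals p^{r−1}(p−3)/2. -/
/-!
Over a finite field `F` of odd characteristic, the conic `x² = t² - b²` (`b ≠ 0`) has
`|F| - 1` points, because `(t + x)(t - x) = b²`. On the other hand the fibre over `t` has
`1 + χ(t² - b²)` points: two when `χ = 1`, one at the roots `t = ±b`, none otherwise. Hence
`2 · #{t | χ(t² - b²) = 1} = |F| - 3`. For `F = 𝔽_p` and `b = 2`, the Legendre condition depends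
only on `t mod p`, and `range (p ^ r)` covers every residue class `p ^ (r - 1)` times.
-/

open Finset Function

theorem Nat.count_mul_of_periodic {P : ℕ → Prop} [DecidablePred P] {m : ℕ} (hP : Periodic P m)
    (n : ℕ) : Nat.count P (n * m) = n * Nat.count P m := by
  induction n with
  | zero => simp
  | succ n ih =>
    have hshift : ∀ k, P (k + m) = P k := hP
    rw [Nat.succ_mul, Nat.count_add']
    simp only [hshift, ih, Nat.succ_mul]

theorem ZMod.card_filter_range_natCast (n : ℕ) [NeZero n] (P : ZMod n → Prop) [DecidablePred P] :
    #((range n).filter fun t : ℕ => P t) = #{z : ZMod n | P z} := by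
  refine card_nbij' (fun t => (t : ZMod n)) ZMod.val ?_ ?_ ?_ ?_
  · intro t ht
    simpa using (mem_filter.mp ht).2
  · intro z hz
    simpa [ZMod.val_lt] using hz
  · intro t ht
    exact ZMod.val_cast_of_lt (mem_range.mp (mem_filter.mp ht).1)
  · intro z _
    exact ZMod.natCast_zmod_val z

section FiniteField

variable {F : Type*} [Field F] [Fintype F] [DecidableEq F]

theorem card_sq_eq_sq_sub_of_ne_zero (hF : ringChar F ≠ 2) {c : F} (hc : c ≠ 0) :
    #{q : F × F | q.2 ^ 2 = q.1 ^ 2 - c} = Fintype.card F - 1 := by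
  have h2 : (2 : F) ≠ 0 := Ring.two_ne_zero hF
  have hsum_ne_zero : ∀ q : F × F, q.2 ^ 2 = q.1 ^ 2 - c → q.1 + q.2 ≠ 0 := by
    intro q hq h
    rw [eq_neg_of_add_eq_zero_right h] at hq
    exact hc (by linear_combination hq)
  rw [← card_univ, ← card_erase_of_mem (mem_univ 0)]
  refine card_nbij' (fun q => q.1 + q.2) (fun a => ((a + c / a) / 2, (a - c / a) / 2))
    ?_ ?_ ?_ ?_
  · intro q hq
    simpa using hsum_ne_zero q (by simpa using hq)
  · intro a ha
    have ha : a ≠ 0 := by simpa using ha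
    simp only [coe_filter, mem_univ, true_and, Set.mem_ofPred_eq]
    field_simp
    ring
  · intro q hq
    have hq : q.2 ^ 2 = q.1 ^ 2 - c := by simpa using hq
    have hne := hsum_ne_zero q hq
    have hdiv : c / (q.1 + q.2) = q.1 - q.2 := by
      field_simp
      linear_combination hq
    ext <;> simp only [hdiv] <;> field_simp <;> ring
  · intro a ha
    have ha : a ≠ 0 := by simpa using ha
    dsimp only
    field_simp
    ring

theorem card_sqrts_eq_ite (hF : ringChar F ≠ 2) (u : F) :
    #{x : F | x ^ 2 = u} =
      2 * (if quadraticChar F u = 1 then 1 else 0) + (if u = 0 then 1 else 0) := by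
  have hcard : (#{x : F | x ^ 2 = u} : ℤ) = quadraticChar F u + 1 := by
    rw [← quadraticChar_card_sqrts hF u, Set.toFinset_ofPred]
  by_cases hu : u = 0
  · simp_all
  · rcases quadraticChar_dichotomy hu with h | h <;> simp [h, hu] at hcard ⊢ <;> omega

theorem two_mul_card_quadraticChar_sq_sub_sq_eq_one_add_three (hF : ringChar F ≠ 2) {b : F}
    (hb : b ≠ 0) :
    2 * #{t : F | quadraticChar F (t ^ 2 - b ^ 2) = 1} + 3 = Fintype.card F := by
  have hpoints : ∑ t : F, #{x : F | x ^ 2 = t ^ 2 - b ^ 2} = Fintype.card F - 1 := by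
    rw [← card_sq_eq_sq_sub_of_ne_zero hF (pow_ne_zero 2 hb), card_filter, Fintype.sum_prod_type]
    simp only [card_filter]
  have hroots : #{t : F | t ^ 2 - b ^ 2 = 0} = 2 := by
    have : ({t : F | t ^ 2 - b ^ 2 = 0} : Finset F) = {b, -b} := by
      ext t
      simp [sub_eq_zero, sq_eq_sq_iff_eq_or_eq_neg]
    rw [this, card_pair]
    exact fun h => hb ((Ring.eq_self_iff_eq_zero_of_char_ne_two hF).mp h.symm)
  simp only [card_sqrts_eq_ite hF, sum_add_distrib, ← mul_sum, sum_boole, Nat.cast_id,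
    hroots] at hpoints
  have := Fintype.card_pos (α := F)
  omega

end FiniteField

theorem stmt_2 (p : ℕ) [Fact p.Prime] (hp : Odd p) (r : ℕ) (hr : 1 ≤ r) :
    ((Finset.range (p ^ r)).filter
        fun t : ℕ => legendreSym p ((t : ℤ) ^ 2 - 4) = 1).card * 2
      = p ^ (r - 1) * (p - 3) := by
  have hF : ringChar (ZMod p) ≠ 2 := by
    rw [ZMod.ringChar_zmod_n]
    rintro rfl
    norm_num at hp
  have hleg (t : ℕ) :
      legendreSym p ((t : ℤ) ^ 2 - 4) = quadraticChar (ZMod p) ((t : ZMod p) ^ 2 - 2 ^ 2) := by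
    simp only [legendreSym]
    norm_num
  have hcount := two_mul_card_quadraticChar_sq_sub_sq_eq_one_add_three hF (Ring.two_ne_zero hF)
  simp only [hleg]
  rw [ZMod.card] at hcount
  obtain ⟨s, rfl⟩ := Nat.exists_eq_add_of_le' hr
  rw [← Nat.count_eq_card_filter_range, pow_succ p, Nat.count_mul_of_periodic (fun t => by simp),
    Nat.count_eq_card_filter_range,
    ZMod.card_filter_range_natCast p fun z => quadraticChar (ZMod p) (z ^ 2 - 2 ^ 2) = 1,
    Nat.add_sub_cancel, mul_assoc]
  congr 1
  omega
end

section
/- Let p be an odd prime, r ≥ 1, and 1 ≤ l ≤ r−1. Then #{t ∈ Z/p^rZ : p^l ∥ (t²−4), ((t²−4)p^{−l}/p) = 1} = p^{r−l−1}(p−1), i.e. the number of residues t ∈ Z/p^rZ such that p^l exactly divides t² − 4 and (t²−4)/p^l is a quadratic residue mod p equals p^{r−l−1}(p−1). -/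
open Finset

lemma qr_count (p : ℕ) [Fact p.Prime] (hp : Odd p) :
    (univ.filter (fun x : ZMod p => quadraticChar (ZMod p) x = 1)).card = (p - 1) / 2 := by
  have hp2 : ringChar (ZMod p) ≠ 2 := by
    rw [ZMod.ringChar_zmod_n]; rintro rfl
    exact (Nat.not_odd_iff_even.mpr even_two) hp
  set χ := quadraticChar (ZMod p) with hχ
  set A := univ.filter (fun x : ZMod p => χ x = 1) with hA
  set B := univ.filter (fun x : ZMod p => χ x = -1) with hB
  have hdisj : Disjoint A B := by
    simp only [disjoint_filter, hA, hB]
    intro x _ h1 h2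
    rw [h1] at h2; norm_num at h2
  have hsum : ∑ x : ZMod p, χ x = 0 := quadraticChar_sum_zero hp2
  have hunion : A ∪ B = univ.filter (fun x : ZMod p => x ≠ 0) := by
    ext x
    simp only [hA, hB, mem_union, mem_filter, mem_univ, true_and, ← or_and_right]
    constructor
    · rintro (h | h) <;> intro h0 <;> rw [h0, hχ, MulChar.map_zero] at h <;> norm_num at h
    · intro hx; exact quadraticChar_dichotomy hx
  have hsum2 : ∑ x ∈ A ∪ B, χ x = 0 := by
    rw [← hsum]
    apply Finset.sum_subset (subset_univ _)
    intro x _ hx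
    rw [hunion, mem_filter] at hx
    push_neg at hx
    rw [hx (mem_univ x), hχ, MulChar.map_zero]
  rw [Finset.sum_union hdisj] at hsum2
  have hsA : ∑ x ∈ A, χ x = A.card := by
    rw [Finset.sum_congr rfl (fun x hx => (mem_filter.mp hx).2), Finset.sum_const, nsmul_eq_mul, mul_one]
  have hsB : ∑ x ∈ B, χ x = -B.card := by
    rw [Finset.sum_congr rfl (fun x hx => (mem_filter.mp hx).2), Finset.sum_const, nsmul_eq_mul, mul_neg_one]
  have hcard : A.card = B.card := by
    rw [hsA, hsB] at hsum2; omega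
  have htot : A.card + B.card = p - 1 := by
    rw [← Finset.card_union_of_disjoint hdisj, hunion]
    rw [Finset.filter_ne' univ 0, Finset.card_erase_of_mem (mem_univ 0), Finset.card_univ, ZMod.card]
  omega

lemma count_lin (p : ℕ) [Fact p.Prime] (hp : Odd p) (c d : ℤ) (hc : (c : ZMod p) ≠ 0) :
    ((range p).filter (fun s : ℕ => legendreSym p (c * s + d) = 1)).card = (p - 1) / 2 := by
  have h1 : ((range p).filter (fun s : ℕ => legendreSym p (c * s + d) = 1)).card
      = (univ.filter (fun x : ZMod p => quadraticChar (ZMod p) (c * x + d) = 1)).card := by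
    refine Finset.card_nbij' (fun s => (s : ZMod p)) (fun x => x.val) ?_ ?_ ?_ ?_
    · intro s hs
      simp only [mem_coe, mem_filter, mem_range] at hs ⊢
      refine ⟨mem_univ _, ?_⟩
      have := hs.2
      rw [legendreSym] at this
      push_cast at this
      exact this
    · intro x hx
      simp only [mem_coe, mem_filter, mem_univ, true_and] at hx ⊢
      refine ⟨mem_range.mpr (ZMod.val_lt x), ?_⟩
      rw [legendreSym]
      push_cast
      rw [ZMod.natCast_val, ZMod.cast_id]
      exact hx
    · intro s hs
      simp only [mem_coe, mem_filter, mem_range] at hs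
      exact ZMod.val_natCast_of_lt hs.1
    · intro x _
      simp [ZMod.natCast_val, ZMod.cast_id]
  have h2 : (univ.filter (fun x : ZMod p => quadraticChar (ZMod p) (c * x + d) = 1)).card
      = (univ.filter (fun y : ZMod p => quadraticChar (ZMod p) y = 1)).card := by
    refine Finset.card_nbij' (fun x => (c : ZMod p) * x + d) (fun y => (c : ZMod p)⁻¹ * (y - d)) ?_ ?_ ?_ ?_
    · intro x hx; simpa using (mem_filter.mp hx).2
    · intro y hy
      simp only [mem_coe, mem_filter, mem_univ, true_and] at hy ⊢
      have he : (c : ZMod p) * ((c : ZMod p)⁻¹ * (y - d)) + d = y := by field_simp; ring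
      rw [he]; exact hy
    · intro x _
      field_simp; ring
    · intro y _
      field_simp; ring
  rw [h1, h2, qr_count p hp]

lemma count_periodic (a k : ℕ) (ha : 0 < a) (P : ℕ → Prop) [DecidablePred P]
    (hP : ∀ t, P t ↔ P (t % a)) :
    ((range (a * k)).filter P).card = k * ((range a).filter P).card := by
  have h : ((range (a * k)).filter P).card = ((range k) ×ˢ ((range a).filter P)).card := by
    refine Finset.card_nbij' (fun t => (t / a, t % a)) (fun qs => a * qs.1 + qs.2) ?_ ?_ ?_ ?_
    · intro t ht
      simp only [mem_coe, mem_filter, mem_range, mem_product] at ht ⊢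
      refine ⟨?_, Nat.mod_lt _ ha, (hP t).mp ht.2⟩
      exact Nat.div_lt_of_lt_mul ht.1
    · intro qs hqs
      simp only [mem_coe, mem_filter, mem_range, mem_product] at hqs ⊢
      obtain ⟨hq, hs, hPs⟩ := hqs
      constructor
      · calc a * qs.1 + qs.2 < a * qs.1 + a := Nat.add_lt_add_left hs _
          _ = a * (qs.1 + 1) := by ring
          _ ≤ a * k := Nat.mul_le_mul_left a hq
      · rw [hP, Nat.mul_add_mod, Nat.mod_eq_of_lt hs]; exact hPs
    · intro t _; exact Nat.div_add_mod t a
    · intro qs hqs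
      simp only [mem_coe, mem_filter, mem_range, mem_product] at hqs
      obtain ⟨_, hs, _⟩ := hqs
      rw [Prod.ext_iff]
      constructor
      · simp only
        rw [Nat.mul_add_div ha, Nat.div_eq_of_lt hs, add_zero]
      · simp only
        rw [Nat.mul_add_mod, Nat.mod_eq_of_lt hs]
  rw [h, Finset.card_product, Finset.card_range]

lemma count_lin_pow (p : ℕ) [Fact p.Prime] (hp : Odd p) (m : ℕ) (hm : 1 ≤ m) (c d : ℤ)
    (hc : (c : ZMod p) ≠ 0) :
    ((range (p ^ m)).filter (fun u : ℕ => legendreSym p (c * u + d) = 1)).card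
      = p ^ (m - 1) * ((p - 1) / 2) := by
  have hpm : p ^ m = p * p ^ (m - 1) := by
    conv_lhs => rw [show m = 1 + (m - 1) by omega]
    rw [pow_add, pow_one]
  have hper : ∀ t : ℕ, (legendreSym p (c * t + d) = 1) ↔ (legendreSym p (c * ((t % p : ℕ) : ℤ) + d) = 1) := by
    intro t
    have h1 : Int.ModEq (p : ℤ) ((t % p : ℕ) : ℤ) (t : ℤ) := by
      push_cast
      exact Int.emod_emod_of_dvd _ dvd_rfl
    have h2 : (c * ((t % p : ℕ) : ℤ) + d) % (p : ℤ) = (c * (t : ℤ) + d) % (p : ℤ) :=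
      (h1.mul_left c).add_right d
    rw [legendreSym.mod p (c * (t : ℤ) + d), legendreSym.mod p (c * ((t % p : ℕ) : ℤ) + d), h2]
  rw [hpm, count_periodic p (p ^ (m - 1)) (Fact.out : p.Prime).pos _ hper,
    count_lin p hp c d hc]

lemma key_equiv (p : ℕ) [Fact p.Prime] (hp : Odd p) (l : ℕ) (hl : 1 ≤ l) (A e : ℤ)
    (he : ¬ (p : ℤ) ∣ e) (t : ℕ)
    (hfac : (t : ℤ) ^ 2 - 4 = (p : ℤ) ^ l * (A * (A * (p : ℤ) ^ l + e))) :
    ((p : ℤ) ^ l ∣ ((t : ℤ) ^ 2 - 4) ∧ ¬ (p : ℤ) ^ (l + 1) ∣ ((t : ℤ) ^ 2 - 4) ∧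
      legendreSym p (((t : ℤ) ^ 2 - 4) / (p : ℤ) ^ l) = 1) ↔ legendreSym p (e * A) = 1 := by
  have hp0 : ((p : ℤ)) ^ l ≠ 0 := pow_ne_zero l (Int.natCast_ne_zero.mpr (Fact.out : p.Prime).ne_zero)
  have hq : ((t : ℤ) ^ 2 - 4) / (p : ℤ) ^ l = A * (A * (p : ℤ) ^ l + e) := by
    rw [hfac, Int.mul_ediv_cancel_left _ hp0]
  have hd : (p : ℤ) ∣ A * (p : ℤ) ^ l := Dvd.dvd.mul_left (dvd_pow_self (p : ℤ) (by omega)) A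
  have hmod : legendreSym p (A * (p : ℤ) ^ l + e) = legendreSym p e := by
    rw [legendreSym.mod p (A * (p : ℤ) ^ l + e), legendreSym.mod p e]
    congr 1
    have h := (Int.emod_emod_of_dvd  (A * (p : ℤ) ^ l + e) (dvd_refl (p:ℤ)))
    have h2 : (A * (p : ℤ) ^ l + e) % (p : ℤ) = (0 + e) % (p : ℤ) :=
      Int.ModEq.add_right e (Int.modEq_zero_iff_dvd.mpr hd)
    rw [h2, zero_add]
  have hlq : legendreSym p (A * (A * (p : ℤ) ^ l + e)) = legendreSym p e * legendreSym p A := by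
    rw [legendreSym.mul, hmod, mul_comm]
  have hmul : legendreSym p (e * A) = legendreSym p e * legendreSym p A := legendreSym.mul p e A
  constructor
  · rintro ⟨-, -, h3⟩
    rw [hq, hlq] at h3
    rw [hmul]; exact h3
  · intro h
    have hne : ((e * A : ℤ) : ZMod p) ≠ 0 := by
      intro h0
      rw [(legendreSym.eq_zero_iff p _).mpr h0] at h
      norm_num at h
    push_cast at hne
    obtain ⟨heZ, hAZ⟩ := mul_ne_zero_iff.mp hne
    have hpA : ¬ (p : ℤ) ∣ A := by
      intro hdvd
      exact hAZ ((ZMod.intCast_zmod_eq_zero_iff_dvd A p).mpr hdvd)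
    refine ⟨⟨_, hfac⟩, ?_, ?_⟩
    · intro hdvd
      rw [hfac, pow_succ] at hdvd
      have h2 := (mul_dvd_mul_iff_left hp0).mp hdvd
      have hprime : Prime (p : ℤ) := Nat.prime_iff_prime_int.mp Fact.out
      rcases hprime.dvd_mul.mp h2 with h3 | h3
      · exact hpA h3
      · exact he ((Int.dvd_add_right hd).mp h3)
    · rw [hq, hlq]
      rw [hmul] at h
      exact h

lemma not_dvd_four (p : ℕ) [Fact p.Prime] (hp : Odd p) : ¬ (p : ℤ) ∣ 4 := by
  intro h
  have h4 : p ∣ 4 := by exact_mod_cast h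
  have : p ∣ 2 ^ 2 := by norm_num at h4 ⊢; exact h4
  have := (Fact.out : p.Prime).dvd_of_dvd_pow this
  have h2 := Nat.le_of_dvd (by norm_num) this
  obtain ⟨k, hk⟩ := hp
  have := (Fact.out : p.Prime).two_le
  omega

lemma sub_two_fact (p l t : ℕ) [Fact p.Prime] (hpl : 3 ≤ p ^ l)
    (hdA : (p : ℤ) ^ l ∣ (t : ℤ) - 2) : 2 ≤ t ∧ p ^ l ∣ t - 2 := by
  have h2 : 2 ≤ t := by
    by_contra h
    push_neg at h
    have h1 := dvd_neg.mpr hdA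
    rw [neg_sub] at h1
    have hpos : 0 < 2 - (t : ℤ) := by
      have : (t : ℤ) < 2 := by exact_mod_cast h
      omega
    have hle := Int.le_of_dvd hpos h1
    have h3 : (3 : ℤ) ≤ (p : ℤ) ^ l := by exact_mod_cast hpl
    omega
  refine ⟨h2, ?_⟩
  have hcast : ((t - 2 : ℕ) : ℤ) = (t : ℤ) - 2 := by
    push_cast [h2]
    ring
  rw [← hcast] at hdA
  exact_mod_cast hdA

lemma cardA (p : ℕ) [Fact p.Prime] (hp : Odd p) (r l : ℕ) (hl : 1 ≤ l) (hlr : l ≤ r - 1) :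
    ((Finset.range (p ^ r)).filter
        (fun t : ℕ => ((p : ℤ) ^ l ∣ ((t : ℤ) ^ 2 - 4) ∧ ¬ (p : ℤ) ^ (l + 1) ∣ ((t : ℤ) ^ 2 - 4) ∧
          legendreSym p (((t : ℤ) ^ 2 - 4) / (p : ℤ) ^ l) = 1) ∧
          (p : ℤ) ^ l ∣ (t : ℤ) - 2)).card
      = ((Finset.range (p ^ (r - l))).filter
          (fun u : ℕ => legendreSym p ((4 : ℤ) * u + 0) = 1)).card := by
  have hprime : p.Prime := Fact.out
  have hp3 : 3 ≤ p := by
    obtain ⟨k, hk⟩ := hp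
    have := hprime.two_le
    omega
  have hpl : 3 ≤ p ^ l := le_trans hp3 (Nat.le_self_pow (by omega) p)
  have hpl0 : 0 < p ^ l := by omega
  have hrl : l + 1 ≤ r := by omega
  have hpow : p ^ (r - l) * p ^ l = p ^ r := by
    rw [← pow_add]
    congr 1
    omega
  have he4 := not_dvd_four p hp
  refine Finset.card_nbij' (fun t => (t - 2) / p ^ l) (fun u => 2 + u * p ^ l) ?_ ?_ ?_ ?_
  · intro t ht
    simp only [mem_coe, mem_filter, mem_range] at ht ⊢
    obtain ⟨htr, hbig, hdA⟩ := ht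
    obtain ⟨h2, hnat⟩ := sub_two_fact p l t hpl hdA
    have hu : (t - 2) / p ^ l * p ^ l = t - 2 := Nat.div_mul_cancel hnat
    constructor
    · rw [Nat.div_lt_iff_lt_mul hpl0, hpow]
      omega
    · have h3 : t = (t - 2) / p ^ l * p ^ l + 2 := by omega
      have ht2 : (t : ℤ) = ((t - 2) / p ^ l : ℕ) * (p : ℤ) ^ l + 2 := by
        exact_mod_cast h3
      have hfac : (t : ℤ) ^ 2 - 4 = (p : ℤ) ^ l *
          (((t - 2) / p ^ l : ℕ) * (((t - 2) / p ^ l : ℕ) * (p : ℤ) ^ l + 4)) := by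
        rw [ht2]; ring
      have := (key_equiv p hp l hl _ 4 he4 t hfac).mp hbig
      rw [add_zero]
      exact this
  · intro u hu
    simp only [mem_coe, mem_filter, mem_range] at hu ⊢
    obtain ⟨hur, hleg⟩ := hu
    have htlt : 2 + u * p ^ l < p ^ r := by
      have h1 : (u + 1) * p ^ l ≤ p ^ (r - l) * p ^ l := Nat.mul_le_mul_right _ (by omega)
      rw [hpow, add_mul, one_mul] at h1
      omega
    refine ⟨htlt, ?_, ?_⟩
    · have hfac : ((2 + u * p ^ l : ℕ) : ℤ) ^ 2 - 4 = (p : ℤ) ^ l *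
          ((u : ℤ) * ((u : ℤ) * (p : ℤ) ^ l + 4)) := by
        push_cast; ring
      refine (key_equiv p hp l hl _ 4 he4 _ hfac).mpr ?_
      rw [add_zero] at hleg
      exact hleg
    · have : ((2 + u * p ^ l : ℕ) : ℤ) - 2 = (u : ℤ) * (p : ℤ) ^ l := by push_cast; ring
      rw [this]
      exact dvd_mul_left _ _
  · intro t ht
    simp only [mem_coe, mem_filter, mem_range] at ht
    obtain ⟨htr, hbig, hdA⟩ := ht
    obtain ⟨h2, hnat⟩ := sub_two_fact p l t hpl hdA
    show 2 + (t - 2) / p ^ l * p ^ l = t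
    rw [Nat.div_mul_cancel hnat]
    omega
  · intro u _
    simp only
    rw [Nat.add_sub_cancel_left, Nat.mul_div_cancel _ hpl0]

lemma cardB (p : ℕ) [Fact p.Prime] (hp : Odd p) (r l : ℕ) (hl : 1 ≤ l) (hlr : l ≤ r - 1) :
    ((Finset.range (p ^ r)).filter
        (fun t : ℕ => ((p : ℤ) ^ l ∣ ((t : ℤ) ^ 2 - 4) ∧ ¬ (p : ℤ) ^ (l + 1) ∣ ((t : ℤ) ^ 2 - 4) ∧
          legendreSym p (((t : ℤ) ^ 2 - 4) / (p : ℤ) ^ l) = 1) ∧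
          (p : ℤ) ^ l ∣ (t : ℤ) + 2)).card
      = ((Finset.range (p ^ (r - l))).filter
          (fun u : ℕ => legendreSym p ((-4 : ℤ) * u + (-4)) = 1)).card := by
  have hprime : p.Prime := Fact.out
  have hp3 : 3 ≤ p := by
    obtain ⟨k, hk⟩ := hp
    have := hprime.two_le
    omega
  have hpl : 3 ≤ p ^ l := le_trans hp3 (Nat.le_self_pow (by omega) p)
  have hpl0 : 0 < p ^ l := by omega
  have hrl : l + 1 ≤ r := by omega
  have hpow : p ^ (r - l) * p ^ l = p ^ r := by
    rw [← pow_add]; congr 1; omega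
  have hem4 : ¬ (p : ℤ) ∣ (-4) := fun h => not_dvd_four p hp (dvd_neg.mp h)
  refine Finset.card_nbij' (fun t => (t + 2) / p ^ l - 1) (fun u => (u + 1) * p ^ l - 2)
    ?_ ?_ ?_ ?_
  · intro t ht
    simp only [mem_coe, mem_filter, mem_range] at ht ⊢
    obtain ⟨htr, hbig, hdB⟩ := ht
    have hnat : p ^ l ∣ t + 2 := by exact_mod_cast hdB
    have hk : (t + 2) / p ^ l * p ^ l = t + 2 := Nat.div_mul_cancel hnat
    have hk1 : 1 ≤ (t + 2) / p ^ l := by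
      rcases Nat.eq_zero_or_pos ((t + 2) / p ^ l) with h0 | h0
      · rw [h0, zero_mul] at hk; omega
      · omega
    have h1 : (t + 2) / p ^ l * p ^ l < (p ^ (r - l) + 1) * p ^ l := by
      rw [add_mul, one_mul, hpow]; omega
    have hklt := Nat.lt_of_mul_lt_mul_right h1
    constructor
    · omega
    · set u := (t + 2) / p ^ l - 1 with hu
      have htk : (u + 1) * p ^ l = t + 2 := by
        rw [hu, Nat.sub_add_cancel hk1]; exact hk
      have hcast : ((u : ℤ) + 1) * (p : ℤ) ^ l = (t : ℤ) + 2 := by exact_mod_cast htk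
      have ht2 : (t : ℤ) = ((u : ℤ) + 1) * (p : ℤ) ^ l - 2 := by linarith
      have hfac : (t : ℤ) ^ 2 - 4 = (p : ℤ) ^ l *
          (((u : ℤ) + 1) * (((u : ℤ) + 1) * (p : ℤ) ^ l + (-4))) := by
        rw [ht2]; ring
      have hres := (key_equiv p hp l hl _ (-4) hem4 t hfac).mp hbig
      rw [show ((-4 : ℤ) * (u : ℤ) + (-4)) = (-4) * ((u : ℤ) + 1) by ring]
      exact hres
  · intro u hu
    simp only [mem_coe, mem_filter, mem_range] at hu ⊢
    obtain ⟨hur, hleg⟩ := hu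
    have hM3 : 3 ≤ (u + 1) * p ^ l := le_trans hpl (Nat.le_mul_of_pos_left _ (by omega))
    have hMle : (u + 1) * p ^ l ≤ p ^ r := by
      rw [← hpow]; exact Nat.mul_le_mul_right _ (by omega)
    have htk : (u + 1) * p ^ l - 2 + 2 = (u + 1) * p ^ l := by omega
    have ht2 : (((u + 1) * p ^ l - 2 : ℕ) : ℤ) = ((u : ℤ) + 1) * (p : ℤ) ^ l - 2 := by
      rw [Nat.cast_sub (by omega)]
      push_cast; ring
    refine ⟨by omega, ?_, ?_⟩
    · have hfac : (((u + 1) * p ^ l - 2 : ℕ) : ℤ) ^ 2 - 4 = (p : ℤ) ^ l *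
          (((u : ℤ) + 1) * (((u : ℤ) + 1) * (p : ℤ) ^ l + (-4))) := by
        rw [ht2]; ring
      refine (key_equiv p hp l hl _ (-4) hem4 _ hfac).mpr ?_
      rw [show ((-4 : ℤ) * ((u : ℤ) + 1)) = (-4) * (u : ℤ) + (-4) by ring]
      exact hleg
    · rw [ht2, show ((u : ℤ) + 1) * (p : ℤ) ^ l - 2 + 2 = ((u : ℤ) + 1) * (p : ℤ) ^ l by ring]
      exact dvd_mul_left _ _
  · intro t ht
    simp only [mem_coe, mem_filter, mem_range] at ht
    obtain ⟨htr, hbig, hdB⟩ := ht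
    have hnat : p ^ l ∣ t + 2 := by exact_mod_cast hdB
    have hk : (t + 2) / p ^ l * p ^ l = t + 2 := Nat.div_mul_cancel hnat
    have hk1 : 1 ≤ (t + 2) / p ^ l := by
      rcases Nat.eq_zero_or_pos ((t + 2) / p ^ l) with h0 | h0
      · rw [h0, zero_mul] at hk; omega
      · omega
    show ((t + 2) / p ^ l - 1 + 1) * p ^ l - 2 = t
    rw [Nat.sub_add_cancel hk1, hk]
    omega
  · intro u hu
    simp only [mem_coe, mem_range] at hu
    have hM3 : 3 ≤ (u + 1) * p ^ l := le_trans hpl (Nat.le_mul_of_pos_left _ (by omega))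
    show ((u + 1) * p ^ l - 2 + 2) / p ^ l - 1 = u
    rw [Nat.sub_add_cancel (by omega), Nat.mul_div_cancel _ hpl0]
    omega


theorem stmt_4 (p : ℕ) [Fact p.Prime] (hp : Odd p) (r l : ℕ) (hl : 1 ≤ l) (hlr : l ≤ r - 1) :
    ((Finset.range (p ^ r)).filter
        fun t : ℕ => (p : ℤ) ^ l ∣ ((t : ℤ) ^ 2 - 4) ∧ ¬ (p : ℤ) ^ (l + 1) ∣ ((t : ℤ) ^ 2 - 4) ∧
          legendreSym p (((t : ℤ) ^ 2 - 4) / (p : ℤ) ^ l) = 1).card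
      = p ^ (r - l - 1) * (p - 1) := by
  classical
  have hprime : p.Prime := Fact.out
  have hpZ : Prime (p : ℤ) := Nat.prime_iff_prime_int.mp hprime
  have hsplit : ∀ t : ℕ, (p : ℤ) ^ l ∣ ((t : ℤ) ^ 2 - 4) →
      ((p : ℤ) ^ l ∣ (t : ℤ) - 2 ∨ (p : ℤ) ^ l ∣ (t : ℤ) + 2) := by
    intro t h1
    rw [show (t : ℤ) ^ 2 - 4 = ((t : ℤ) - 2) * ((t : ℤ) + 2) by ring] at h1
    by_cases hpd : (p : ℤ) ∣ (t : ℤ) + 2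
    · have hnd : ¬ (p : ℤ) ∣ (t : ℤ) - 2 := by
        intro h2
        have : (p : ℤ) ∣ 4 := by
          have h3 := dvd_sub hpd h2
          rw [show (t : ℤ) + 2 - ((t : ℤ) - 2) = 4 by ring] at h3
          exact h3
        exact not_dvd_four p hp this
      have hcop : IsCoprime ((p : ℤ) ^ l) ((t : ℤ) - 2) :=
        (hpZ.coprime_iff_not_dvd.mpr hnd).pow_left
      exact Or.inr (hcop.dvd_of_dvd_mul_left h1)
    · have hcop : IsCoprime ((p : ℤ) ^ l) ((t : ℤ) + 2) :=
        (hpZ.coprime_iff_not_dvd.mpr hpd).pow_left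
      exact Or.inl (hcop.dvd_of_dvd_mul_right h1)
  have hnotboth : ∀ t : ℕ, (p : ℤ) ^ l ∣ (t : ℤ) - 2 → (p : ℤ) ^ l ∣ (t : ℤ) + 2 → False := by
    intro t h1 h2
    have h3 : (p : ℤ) ^ l ∣ 4 := by
      have h4 := dvd_sub h2 h1
      rw [show (t : ℤ) + 2 - ((t : ℤ) - 2) = 4 by ring] at h4
      exact h4
    exact not_dvd_four p hp (dvd_trans (dvd_pow_self (p : ℤ) (by omega)) h3)
  have hfe : ((Finset.range (p ^ r)).filter
        fun t : ℕ => (p : ℤ) ^ l ∣ ((t : ℤ) ^ 2 - 4) ∧ ¬ (p : ℤ) ^ (l + 1) ∣ ((t : ℤ) ^ 2 - 4) ∧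
          legendreSym p (((t : ℤ) ^ 2 - 4) / (p : ℤ) ^ l) = 1)
      = ((Finset.range (p ^ r)).filter
          (fun t : ℕ => ((p : ℤ) ^ l ∣ ((t : ℤ) ^ 2 - 4) ∧ ¬ (p : ℤ) ^ (l + 1) ∣ ((t : ℤ) ^ 2 - 4) ∧
            legendreSym p (((t : ℤ) ^ 2 - 4) / (p : ℤ) ^ l) = 1) ∧ (p : ℤ) ^ l ∣ (t : ℤ) - 2))
        ∪ ((Finset.range (p ^ r)).filter
          (fun t : ℕ => ((p : ℤ) ^ l ∣ ((t : ℤ) ^ 2 - 4) ∧ ¬ (p : ℤ) ^ (l + 1) ∣ ((t : ℤ) ^ 2 - 4) ∧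
            legendreSym p (((t : ℤ) ^ 2 - 4) / (p : ℤ) ^ l) = 1) ∧ (p : ℤ) ^ l ∣ (t : ℤ) + 2)) := by
    rw [← Finset.filter_or]
    apply Finset.filter_congr
    intro t _
    constructor
    · intro h
      rcases hsplit t h.1 with h2 | h2
      · exact Or.inl ⟨h, h2⟩
      · exact Or.inr ⟨h, h2⟩
    · rintro (⟨h, -⟩ | ⟨h, -⟩) <;> exact h
  have hdisj : Disjoint
      ((Finset.range (p ^ r)).filter
          (fun t : ℕ => ((p : ℤ) ^ l ∣ ((t : ℤ) ^ 2 - 4) ∧ ¬ (p : ℤ) ^ (l + 1) ∣ ((t : ℤ) ^ 2 - 4) ∧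
            legendreSym p (((t : ℤ) ^ 2 - 4) / (p : ℤ) ^ l) = 1) ∧ (p : ℤ) ^ l ∣ (t : ℤ) - 2))
      ((Finset.range (p ^ r)).filter
          (fun t : ℕ => ((p : ℤ) ^ l ∣ ((t : ℤ) ^ 2 - 4) ∧ ¬ (p : ℤ) ^ (l + 1) ∣ ((t : ℤ) ^ 2 - 4) ∧
            legendreSym p (((t : ℤ) ^ 2 - 4) / (p : ℤ) ^ l) = 1) ∧ (p : ℤ) ^ l ∣ (t : ℤ) + 2)) := by
    rw [Finset.disjoint_left]
    intro a ha hb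
    simp only [mem_filter] at ha hb
    exact hnotboth a ha.2.2 hb.2.2
  rw [hfe, Finset.card_union_of_disjoint hdisj, cardA p hp r l hl hlr, cardB p hp r l hl hlr]
  have hc4 : ((4 : ℤ) : ZMod p) ≠ 0 := by
    intro h
    exact not_dvd_four p hp ((ZMod.intCast_zmod_eq_zero_iff_dvd 4 p).mp h)
  have hcm4 : ((-4 : ℤ) : ZMod p) ≠ 0 := by
    intro h
    exact not_dvd_four p hp (dvd_neg.mp ((ZMod.intCast_zmod_eq_zero_iff_dvd (-4) p).mp h))
  rw [count_lin_pow p hp (r - l) (by omega) 4 0 hc4,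
    count_lin_pow p hp (r - l) (by omega) (-4) (-4) hcm4]
  have hhalf : (p - 1) / 2 + (p - 1) / 2 = p - 1 := by
    obtain ⟨k, hk⟩ := hp
    omega
  rw [← Nat.mul_add, hhalf]
end

section
/- Let p be an odd prime, r ≥ 1, and t an integer such that (t² − 4)/p is a quadratic non-residue modulo p. Then the number of matrices γ ∈ SL₂(Z/p^rZ) with trace γ ≡ t (mod p^r) equals p^{2r−1}(p−1). -/
section aux
variable {p : ℕ} [Fact p.Prime] {r : ℕ}

lemma aux_isUnit (hr : 1 ≤ r) (x : ZMod (p ^ r))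
    (hx : ZMod.castHom (dvd_pow_self p (Nat.one_le_iff_ne_zero.mp hr)) (ZMod p) x ≠ 0) :
    IsUnit x := by
  have hpr : NeZero (p ^ r) := ⟨pow_ne_zero r (Fact.out : p.Prime).ne_zero⟩
  have h1 : ((x.val : ZMod (p ^ r))) = x := ZMod.natCast_zmod_val x
  rw [← h1]
  rw [ZMod.isUnit_iff_coprime]
  apply Nat.Coprime.pow_right
  rw [Nat.coprime_comm, (Fact.out : p.Prime).coprime_iff_not_dvd]
  intro hdvd
  apply hx
  rw [← h1, map_natCast]
  exact (ZMod.natCast_eq_zero_iff _ _).mpr hdvd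

end aux

theorem stmt_6 (p : ℕ) [Fact p.Prime] (hp : Odd p) (r : ℕ) (hr : 1 ≤ r) (t : ℤ)
    (ht : legendreSym p (t ^ 2 - 4) = -1) :
    Nat.card {γ : Matrix.SpecialLinearGroup (Fin 2) (ZMod (p ^ r)) //
        Matrix.trace (γ : Matrix (Fin 2) (Fin 2) (ZMod (p ^ r))) = (t : ZMod (p ^ r))}
      = p ^ (2 * r - 1) * (p - 1) := by
  classical
  have hpp : p.Prime := Fact.out
  have hpr : NeZero (p ^ r) := ⟨pow_ne_zero r hpp.ne_zero⟩
  set T : ZMod (p ^ r) := (t : ZMod (p ^ r)) with hT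
  -- key: a * (T - a) - 1 is a unit for all a
  have key : ∀ a : ZMod (p ^ r), IsUnit (a * (T - a) - 1) := by
    intro a
    apply aux_isUnit hr
    set f := ZMod.castHom (dvd_pow_self p (Nat.one_le_iff_ne_zero.mp hr)) (ZMod p)
    intro h0
    set x := f a with hx
    have hps : ¬ IsSquare ((t ^ 2 - 4 : ℤ) : ZMod p) := (legendreSym.eq_neg_one_iff p).mp ht
    apply hps
    have h0' : x * ((t : ZMod p) - x) - 1 = 0 := by
      simpa [hx, f, hT, map_sub, map_mul, map_one, map_intCast] using h0
    refine ⟨(t : ZMod p) - 2 * x, ?_⟩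
    push_cast
    linear_combination (4 : ZMod p) * h0'
  set S := {γ : Matrix.SpecialLinearGroup (Fin 2) (ZMod (p ^ r)) //
        Matrix.trace (γ : Matrix (Fin 2) (Fin 2) (ZMod (p ^ r))) = T} with hS
  have hbc : ∀ σ : S, (σ.1.1 0 1) * (σ.1.1 1 0)
      = (σ.1.1 0 0) * (T - σ.1.1 0 0) - 1 := by
    rintro ⟨⟨M, hdet⟩, htr⟩
    rw [Matrix.det_fin_two] at hdet
    have htr' : M 0 0 + M 1 1 = T := by
      rw [← htr]; exact (Matrix.trace_fin_two M).symm
    simp only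
    linear_combination -hdet + (M 0 0) * htr'
  have hb : ∀ σ : S, IsUnit (σ.1.1 0 1) :=
    fun σ => isUnit_of_mul_isUnit_left (by rw [hbc σ]; exact key _)
  have hd : ∀ σ : S, σ.1.1 1 1 = T - σ.1.1 0 0 := by
    rintro ⟨⟨M, hdet⟩, htr⟩
    have htr' : M 0 0 + M 1 1 = T := by
      rw [← htr]; exact (Matrix.trace_fin_two M).symm
    simp only
    linear_combination htr'
  have hdet2 : ∀ x : ZMod (p ^ r) × (ZMod (p ^ r))ˣ,
      Matrix.det !![x.1, (x.2 : ZMod (p ^ r));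
        (x.1 * (T - x.1) - 1) * ((x.2⁻¹ : (ZMod (p ^ r))ˣ) : ZMod (p ^ r)), T - x.1] = 1 := by
    intro x
    rw [Matrix.det_fin_two]
    simp only [Matrix.cons_val', Matrix.cons_val_zero, Matrix.cons_val_one, Matrix.head_cons,
      Matrix.empty_val', Matrix.cons_val_fin_one, Matrix.head_fin_const, Matrix.of_apply]
    have hu : (x.2 : ZMod (p ^ r)) * ((x.2⁻¹ : (ZMod (p ^ r))ˣ) : ZMod (p ^ r)) = 1 :=
      x.2.mul_inv
    linear_combination (-(x.1 * (T - x.1) - 1)) * hu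
  let e : S ≃ ZMod (p ^ r) × (ZMod (p ^ r))ˣ :=
  { toFun := fun σ => (σ.1.1 0 0, (hb σ).unit),
    invFun := fun x =>
      ⟨⟨!![x.1, (x.2 : ZMod (p ^ r));
        (x.1 * (T - x.1) - 1) * ((x.2⁻¹ : (ZMod (p ^ r))ˣ) : ZMod (p ^ r)), T - x.1],
        hdet2 x⟩, by
        show Matrix.trace _ = T
        rw [Matrix.trace_fin_two]
        simp only [Matrix.cons_val', Matrix.cons_val_zero, Matrix.cons_val_one, Matrix.head_cons,
          Matrix.empty_val', Matrix.cons_val_fin_one, Matrix.head_fin_const, Matrix.of_apply]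
        ring⟩,
    left_inv := fun σ => by
      have hbu : ((hb σ).unit : ZMod (p ^ r)) = σ.1.1 0 1 := (hb σ).unit_spec
      have h1 : ((hb σ).unit⁻¹ : (ZMod (p ^ r))ˣ) * (hb σ).unit = 1 := inv_mul_cancel _
      have h2 : (((hb σ).unit⁻¹ : (ZMod (p ^ r))ˣ) : ZMod (p ^ r))
          * ((hb σ).unit : ZMod (p ^ r)) = 1 := by
        rw [← Units.val_mul, h1, Units.val_one]
      have h10 : (σ.1.1 0 0 * (T - σ.1.1 0 0) - 1)
          * (((hb σ).unit⁻¹ : (ZMod (p ^ r))ˣ) : ZMod (p ^ r)) = σ.1.1 1 0 := by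
        rw [← hbc σ]
        linear_combination (σ.1.1 1 0) * h2
          - σ.1.1 1 0 * (((hb σ).unit⁻¹ : (ZMod (p ^ r))ˣ) : ZMod (p ^ r)) * hbu
      apply Subtype.ext
      apply Subtype.ext
      show !![σ.1.1 0 0, ((hb σ).unit : ZMod (p ^ r));
        (σ.1.1 0 0 * (T - σ.1.1 0 0) - 1)
          * (((hb σ).unit⁻¹ : (ZMod (p ^ r))ˣ) : ZMod (p ^ r)), T - σ.1.1 0 0] = σ.1.1
      conv_rhs => rw [Matrix.eta_fin_two σ.1.1]
      rw [hbu, h10, hd σ],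
    right_inv := fun x => by
      apply Prod.ext
      · rfl
      · apply Units.ext
        show ((hb _).unit : ZMod (p ^ r)) = (x.2 : ZMod (p ^ r))
        rw [IsUnit.unit_spec]
        rfl }
  rw [Nat.card_congr e, Nat.card_prod, Nat.card_eq_fintype_card, Nat.card_eq_fintype_card,
    ZMod.card, ZMod.card_units_eq_totient, Nat.totient_prime_pow hpp hr,
    ← mul_assoc, ← pow_add]
  have h : r + (r - 1) = 2 * r - 1 := by omega
  rw [h]
end

section
/- Let p be an odd prime, r ≥ 1, and t an integer such that t² − 4 is a nonzero quadratic residue modulo p. Then the number of matrices γ ∈ SL₂(Z/p^rZ) with trace γ ≡ t (mod p^r) equals p^{2r−1}(p+1). -/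
/-!
Writing `γ = !![a, b; c, t - a]`, the matrices of trace `t` in `SL₂(R)` are the triples with
`b * c = a * (t - a) - 1`. For `R = ℤ/p^r`, local with maximal ideal `𝔪 = (p)` and residue
field `𝔽_p`, sort them by which of `b`, `c` are units. If `b` is a unit, `c` is determined by
`(a, b)`. If only `c` is a unit, `b` is determined by `(a, c)` and must lie in `𝔪`, i.e. `a`
reduces to one of the two roots of `x * (t - x) = 1` in `𝔽_p`. If `b, c ∈ 𝔪`, then `b * c ∈ 𝔪`,
and `a * (t - a) - 1 = m ∈ 𝔪` has exactly one solution over each root `x`: as `t - 2x` is a unit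
(its square is `t² - 4`), `a ↦ a * (t - a) - 1` is injective on the residue class of `x`, a set
of the same size as `𝔪`. In total
`(p^r + 2 p^(r-1)) · p^(r-1) (p - 1) + 2 p^(2(r-1)) = p^(2r-1) (p + 1)`.
-/

open Matrix

section FiberCard

variable {G H F : Type*} [AddGroup G] [AddGroup H] [FunLike F G H] [AddMonoidHomClass F G H]
  (f : F)

theorem card_fiber_eq_card_fiber_zero {y : H} (hy : y ∈ Set.range f) :
    Nat.card {x // f x = y} = Nat.card {x // f x = 0} := by
  obtain ⟨x₀, rfl⟩ := hy
  exact Nat.card_congr <| (Equiv.subRight x₀).subtypeEquiv fun x ↦ by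
    simp [sub_eq_zero]

theorem card_subtype_comp_eq_mul_card_fiber_zero [Finite G] [Finite H]
    (hf : Function.Surjective f) (P : H → Prop) :
    Nat.card {x // P (f x)} = Nat.card {y // P y} * Nat.card {x // f x = 0} := by
  have e : {x // P (f x)} ≃ Σ y : {y // P y}, {x // f x = y} :=
    { toFun x := ⟨⟨f x, x.2⟩, x, rfl⟩
      invFun s := ⟨s.2, by rw [s.2.2]; exact s.1.2⟩
      left_inv _ := rfl
      right_inv := by
        rintro ⟨⟨y, hy⟩, x, hx⟩
        obtain rfl : f x = y := hx
        rfl }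
  have := Fintype.ofFinite {y // P y}
  rw [Nat.card_congr e, Nat.card_sigma, Finset.sum_congr rfl fun y _ ↦
    card_fiber_eq_card_fiber_zero f (hf y.1), Finset.sum_const, Finset.card_univ,
    smul_eq_mul, Fintype.card_eq_nat_card]

theorem card_eq_mul_card_fiber_zero [Finite G] [Finite H] (hf : Function.Surjective f) :
    Nat.card G = Nat.card H * Nat.card {x // f x = 0} := by
  simpa [Nat.card_congr (Equiv.subtypeUnivEquiv fun _ ↦ trivial)] using
    card_subtype_comp_eq_mul_card_fiber_zero f hf fun _ ↦ True

end FiberCard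

theorem Nat.card_subtype_and_add_card_subtype_and_not {α : Type*} [Finite α] (P Q : α → Prop) :
    Nat.card {x // P x ∧ Q x} + Nat.card {x // P x ∧ ¬Q x} = Nat.card {x // P x} := by
  classical
  rw [← Nat.card_sum, ← Nat.card_congr (Equiv.sumCompl fun x : {x // P x} ↦ Q x),
    Nat.card_congr ((Equiv.subtypeSubtypeEquivSubtypeInter P Q).sumCongr
      (Equiv.subtypeSubtypeEquivSubtypeInter P fun x ↦ ¬Q x))]

section Quadric

variable {R : Type*} [CommRing R]

def Matrix.SpecialLinearGroup.traceEqEquiv (t : R) :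
    {γ : SpecialLinearGroup (Fin 2) R // trace (γ : Matrix (Fin 2) (Fin 2) R) = t} ≃
      {v : R × R × R // v.2.1 * v.2.2 = v.1 * (t - v.1) - 1} where
  toFun γ := ⟨(γ.1 0 0, γ.1 0 1, γ.1 1 0), by
    have hdet := γ.1.2
    have htr := γ.2
    rw [det_fin_two] at hdet
    rw [trace_fin_two] at htr
    linear_combination -hdet + γ.1 0 0 * htr⟩
  invFun v := ⟨⟨!![v.1.1, v.1.2.1; v.1.2.2, t - v.1.1], by
    rw [det_fin_two_of]
    linear_combination -v.2⟩, by simp [trace_fin_two]⟩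
  left_inv γ := by
    have htr := γ.2
    rw [trace_fin_two] at htr
    ext i j
    fin_cases i <;> fin_cases j <;> simp
    linear_combination -htr
  right_inv v := rfl

variable (g : R → R)

theorem card_mul_eq_and_isUnit :
    Nat.card {v : R × R × R // v.2.1 * v.2.2 = g v.1 ∧ IsUnit v.2.1} =
      Nat.card R * Nat.card Rˣ := by
  rw [← Nat.card_prod]
  exact Nat.card_congr
    { toFun v := (v.1.1, v.2.2.unit)
      invFun w := ⟨(w.1, w.2, w.2⁻¹ * g w.1), by simp, w.2.isUnit⟩
      left_inv := by
        rintro ⟨⟨a, b, c⟩, h, hb⟩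
        ext <;> simp [← h, Units.inv_mul_eq_iff_eq_mul]
      right_inv w := by ext <;> simp }

theorem card_mul_eq_and_not_isUnit_and_isUnit :
    Nat.card {v : R × R × R // v.2.1 * v.2.2 = g v.1 ∧ ¬IsUnit v.2.1 ∧ IsUnit v.2.2} =
      Nat.card {a // ¬IsUnit (g a)} * Nat.card Rˣ := by
  rw [← Nat.card_prod]
  exact Nat.card_congr
    { toFun v := (⟨v.1.1, fun h ↦ v.2.2.1 (isUnit_of_mul_isUnit_left (v.2.1 ▸ h))⟩,
        v.2.2.2.unit)
      invFun w := ⟨(w.1, w.2⁻¹ * g w.1, w.2), by simp [mul_comm _ (w.2 : R)],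
        fun h ↦ w.1.2 (by simpa using w.2.isUnit.mul h), w.2.isUnit⟩
      left_inv := by
        rintro ⟨⟨a, b, c⟩, h, hb, hc⟩
        ext <;> simp [← h, Units.inv_mul_eq_iff_eq_mul, mul_comm b]
      right_inv w := by ext <;> simp }

theorem card_mul_eq_and_not_isUnit_and_not_isUnit [Finite R] {N : ℕ}
    (hg : ∀ b c, ¬IsUnit b → ¬IsUnit c → Nat.card {a // g a = b * c} = N) :
    Nat.card {v : R × R × R // v.2.1 * v.2.2 = g v.1 ∧ ¬IsUnit v.2.1 ∧ ¬IsUnit v.2.2} =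
      Nat.card {b : R // ¬IsUnit b} ^ 2 * N := by
  have e : {v : R × R × R // v.2.1 * v.2.2 = g v.1 ∧ ¬IsUnit v.2.1 ∧ ¬IsUnit v.2.2} ≃
      Σ w : {b : R // ¬IsUnit b} × {c : R // ¬IsUnit c}, {a // g a = w.1 * w.2} :=
    { toFun v := ⟨(⟨v.1.2.1, v.2.2.1⟩, ⟨v.1.2.2, v.2.2.2⟩), v.1.1, v.2.1.symm⟩
      invFun s := ⟨(s.2, s.1.1, s.1.2), s.2.2.symm, s.1.1.2, s.1.2.2⟩
      left_inv _ := rfl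
      right_inv _ := rfl }
  have := Fintype.ofFinite R
  classical
  rw [Nat.card_congr e, Nat.card_sigma, Finset.sum_congr rfl fun w _ ↦ hg _ _ w.1.2 w.2.2,
    Finset.sum_const, Finset.card_univ, smul_eq_mul, Fintype.card_eq_nat_card, Nat.card_prod, sq]

theorem card_mul_eq [Finite R] {N : ℕ}
    (hg : ∀ b c, ¬IsUnit b → ¬IsUnit c → Nat.card {a // g a = b * c} = N) :
    Nat.card {v : R × R × R // v.2.1 * v.2.2 = g v.1} =
      (Nat.card R + Nat.card {a // ¬IsUnit (g a)}) * Nat.card Rˣ +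
        Nat.card {b : R // ¬IsUnit b} ^ 2 * N := by
  have split_b := Nat.card_subtype_and_add_card_subtype_and_not
    (fun v : R × R × R ↦ v.2.1 * v.2.2 = g v.1) fun v ↦ IsUnit v.2.1
  have split_c := Nat.card_subtype_and_add_card_subtype_and_not
    (fun v : R × R × R ↦ v.2.1 * v.2.2 = g v.1 ∧ ¬IsUnit v.2.1) fun v ↦ IsUnit v.2.2
  simp only [and_assoc] at split_c
  rw [card_mul_eq_and_isUnit] at split_b
  rw [card_mul_eq_and_not_isUnit_and_isUnit,
    card_mul_eq_and_not_isUnit_and_not_isUnit g hg] at split_c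
  rw [← split_b, ← split_c]
  ring

end Quadric

section LocalHom

variable {R k : Type*} [CommRing R] [Field k] (ρ : R →+* k) [IsLocalHom ρ]

theorem not_isUnit_iff_map_eq_zero {x : R} : ¬IsUnit x ↔ ρ x = 0 := by
  rw [← isUnit_map_iff ρ, isUnit_iff_ne_zero, not_not]

variable {ρ} {t : R}

theorem eq_of_map_eq_of_mul_sub_eq (ht : ρ t ^ 2 - 4 ≠ 0) {a a' : R}
    (hroot : ρ a * (ρ t - ρ a) = 1) (hρa : ρ a = ρ a') (h : a * (t - a) = a' * (t - a')) :
    a = a' := by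
  -- `(ρ t - 2 * ρ a) ^ 2 = ρ t ^ 2 - 4` because `ρ a` is a root
  have hunit : IsUnit (t - a - a') := by
    rw [← isUnit_map_iff ρ, isUnit_iff_ne_zero, map_sub, map_sub, ← hρa]
    intro h0
    exact ht (by linear_combination (ρ t - 2 * ρ a) * h0 + 4 * hroot)
  rw [← sub_eq_zero, ← hunit.mul_left_eq_zero]
  linear_combination h

variable [Finite R]

theorem exists_map_eq_and_mul_sub_eq (ht : ρ t ^ 2 - 4 ≠ 0) (hρ : Function.Surjective ρ) {x : k}
    (hx : x * (ρ t - x) = 1) {m : R} (hm : ρ m = 0) :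
    ∃ a, ρ a = x ∧ a * (t - a) - 1 = m := by
  let f : {a // ρ a = x} → {m // ρ m = 0} :=
    fun a ↦ ⟨a * (t - a) - 1, by simp [a.2, hx]⟩
  have hf : Function.Injective f := fun a a' h ↦ Subtype.ext <|
    eq_of_map_eq_of_mul_sub_eq ht (by rw [a.2]; exact hx) (a.2.trans a'.2.symm)
      (by simpa [f] using h)
  obtain ⟨a, ha⟩ := (hf.bijective_of_nat_card_le
    (card_fiber_eq_card_fiber_zero ρ (hρ x)).ge).2 ⟨m, hm⟩
  exact ⟨a, a.2, congrArg Subtype.val ha⟩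

theorem card_mul_sub_eq (ht : ρ t ^ 2 - 4 ≠ 0) (hρ : Function.Surjective ρ) {m : R}
    (hm : ρ m = 0) :
    Nat.card {a // a * (t - a) - 1 = m} = Nat.card {x : k // x * (ρ t - x) = 1} := by
  have hroot (a : {a // a * (t - a) - 1 = m}) : ρ a * (ρ t - ρ a) = 1 := by
    simpa [hm, sub_eq_zero] using congrArg ρ a.2
  refine Nat.card_eq_of_bijective (fun a ↦ ⟨ρ a, hroot a⟩) ⟨fun a a' h ↦ ?_, fun x ↦ ?_⟩
  · exact Subtype.ext <| eq_of_map_eq_of_mul_sub_eq ht (hroot a) (congrArg Subtype.val h)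
      (by linear_combination a.2 - a'.2)
  · obtain ⟨a, hax, ha⟩ := exists_map_eq_and_mul_sub_eq ht hρ x.2 hm
    exact ⟨⟨a, ha⟩, Subtype.ext hax⟩

theorem card_not_isUnit_mul_sub [Finite k] (hρ : Function.Surjective ρ) :
    Nat.card {a // ¬IsUnit (a * (t - a) - 1)} =
      Nat.card {x : k // x * (ρ t - x) = 1} * Nat.card {a // ρ a = 0} := by
  rw [← card_subtype_comp_eq_mul_card_fiber_zero ρ hρ]
  exact Nat.card_congr <| Equiv.subtypeEquivRight fun a ↦ by
    rw [not_isUnit_iff_map_eq_zero ρ, map_sub, map_mul, map_sub, map_one, sub_eq_zero]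

theorem card_specialLinearGroup_trace_eq [Finite k] (ht : ρ t ^ 2 - 4 ≠ 0)
    (hρ : Function.Surjective ρ) :
    Nat.card {γ : SpecialLinearGroup (Fin 2) R // trace (γ : Matrix (Fin 2) (Fin 2) R) = t} =
      (Nat.card R + Nat.card {x : k // x * (ρ t - x) = 1} * Nat.card {a // ρ a = 0}) *
          Nat.card Rˣ +
        Nat.card {a // ρ a = 0} ^ 2 * Nat.card {x : k // x * (ρ t - x) = 1} := by
  have hfiber (b c : R) (hb : ¬IsUnit b) (hc : ¬IsUnit c) :
      Nat.card {a // a * (t - a) - 1 = b * c} = Nat.card {x : k // x * (ρ t - x) = 1} :=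
    card_mul_sub_eq ht hρ <| by rw [map_mul, (not_isUnit_iff_map_eq_zero ρ).mp hb, zero_mul]
  rw [Nat.card_congr (SpecialLinearGroup.traceEqEquiv t), card_mul_eq _ hfiber,
    card_not_isUnit_mul_sub hρ,
    Nat.card_congr (Equiv.subtypeEquivRight fun _ ↦ not_isUnit_iff_map_eq_zero ρ)]

end LocalHom

theorem card_mul_sub_eq_one_eq_two {k : Type*} [Field k] [NeZero (2 : k)] {τ s : k}
    (hs : τ ^ 2 - 4 = s * s) (hs0 : s ≠ 0) : Nat.card {x : k // x * (τ - x) = 1} = 2 := by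
  have hroots (x : k) : x * (τ - x) = 1 ↔ x ∈ ({(τ + s) / 2, (τ - s) / 2} : Set k) := by
    have := quadratic_eq_zero_iff one_ne_zero (b := -τ) (c := 1) (s := s)
      (by rw [discrim]; linear_combination hs) x
    simp only [neg_neg, mul_one, one_mul] at this
    rw [Set.mem_insert_iff, Set.mem_singleton_iff, ← this]
    constructor <;> intro h <;> linear_combination -h
  have hne : (τ + s) / 2 ≠ (τ - s) / 2 := by
    intro h
    rw [div_left_inj' two_ne_zero] at h
    have h2s : 2 * s = 0 := by linear_combination h
    exact hs0 ((mul_eq_zero.mp h2s).resolve_left two_ne_zero)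
  rw [Nat.card_congr (Equiv.subtypeEquivRight hroots), Nat.card_coe_set_eq, Set.ncard_pair hne]

theorem ZMod.isLocalHom_castHom_prime_pow {p r : ℕ} [Fact p.Prime] (hr : r ≠ 0) :
    IsLocalHom (ZMod.castHom (dvd_pow_self p hr) (ZMod p)) := by
  have : NeZero (p ^ r) := ⟨pow_ne_zero r (Fact.out : p.Prime).ne_zero⟩
  refine ⟨fun x hx ↦ ?_⟩
  rw [← ZMod.natCast_zmod_val x] at hx ⊢
  rw [map_natCast, isUnit_iff_ne_zero, Ne, ZMod.natCast_eq_zero_iff] at hx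
  rwa [ZMod.isUnit_natCast_iff_not_dvd_pow Fact.out (Nat.pos_of_ne_zero hr)]

theorem ZMod.card_castHom_prime_pow_eq_zero {p n : ℕ} [Fact p.Prime] :
    Nat.card {a : ZMod (p ^ (n + 1)) //
      ZMod.castHom (dvd_pow_self p n.add_one_ne_zero) (ZMod p) a = 0} = p ^ n := by
  have := card_eq_mul_card_fiber_zero _ (ZMod.ringHom_surjective
    (ZMod.castHom (dvd_pow_self p n.add_one_ne_zero) (ZMod p)))
  rw [Nat.card_zmod, Nat.card_zmod] at this
  exact Nat.eq_of_mul_eq_mul_left (Fact.out : p.Prime).pos (this.symm.trans (pow_succ' p n))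

theorem stmt_7 (p : ℕ) [Fact p.Prime] (hp : Odd p) (r : ℕ) (hr : 1 ≤ r) (t : ℤ)
    (ht : legendreSym p (t ^ 2 - 4) = 1) :
    Nat.card {γ : Matrix.SpecialLinearGroup (Fin 2) (ZMod (p ^ r)) //
        Matrix.trace (γ : Matrix (Fin 2) (Fin 2) (ZMod (p ^ r))) = (t : ZMod (p ^ r))}
      = p ^ (2 * r - 1) * (p + 1) := by
  have hp' : p.Prime := Fact.out
  obtain ⟨n, rfl⟩ : ∃ n, r = n + 1 := ⟨r - 1, by omega⟩
  let ρ := ZMod.castHom (dvd_pow_self p n.add_one_ne_zero) (ZMod p)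
  have := ZMod.isLocalHom_castHom_prime_pow (p := p) n.add_one_ne_zero
  have hρ : Function.Surjective ρ := ZMod.ringHom_surjective ρ
  have hdisc : ((t ^ 2 - 4 : ℤ) : ZMod p) ≠ 0 := fun h ↦ by
    simp [(legendreSym.eq_zero_iff p _).mpr h] at ht
  have hρt : ρ t ^ 2 - 4 = ((t ^ 2 - 4 : ℤ) : ZMod p) := by simp [ρ]
  obtain ⟨s, hs⟩ := (legendreSym.eq_one_iff p hdisc).mp ht
  have : NeZero (2 : ZMod p) := ⟨Ring.two_ne_zero <| by
    rw [ZMod.ringChar_zmod_n]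
    rintro rfl
    exact absurd hp (by decide)⟩
  have hroots : Nat.card {x : ZMod p // x * (ρ t - x) = 1} = 2 :=
    card_mul_sub_eq_one_eq_two (hρt.trans hs) (by rintro rfl; simp_all)
  have hunits : Nat.card (ZMod (p ^ (n + 1)))ˣ = p ^ n * (p - 1) := by
    rw [Nat.card_eq_fintype_card, ZMod.card_units_eq_totient,
      Nat.totient_prime_pow hp' n.add_one_pos, Nat.add_sub_cancel]
  rw [card_specialLinearGroup_trace_eq (hρt ▸ hdisc) hρ, hroots,
    ZMod.card_castHom_prime_pow_eq_zero, hunits, Nat.card_zmod]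
  obtain ⟨q, rfl⟩ : ∃ q, p = q + 1 := ⟨p - 1, by have := hp'.pos; omega⟩
  rw [Nat.add_sub_cancel, show 2 * (n + 1) - 1 = 2 * n + 1 by omega]
  ring
end

section
/- Let p be an odd prime, r ≥ 1, and t an integer with t² − 4 ≡ 0 (mod p^r). Then the number of matrices γ ∈ SL₂(Z/p^rZ) with trace γ ≡ t (mod p^r) equals p^{2r} + p^{2r−1} − p^{⌊(3r−1)/2⌋}. -/
/-!
Write `γ = u • 1 + N` with `2u = t` (possible as `p` is odd); then `u² = 1`, and `det γ = 1` says
exactly that the traceless matrix `N` has determinant `0`, so we count the cone `bc = x²` over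
`ℤ/pʳ`. Solutions in which `b` or `c` is a unit are counted directly: the other one is then
determined by `x`. If `b` and `c` are non-units then so is `x`, and `(x, b, c) = p • (x', b', c')`
with `(x', b', c')` taken modulo `p^(r-1)` and solving `bc = x²` modulo `p^(r-2)`; each solution
modulo `p^(r-2)` has `p³` such lifts. Hence the number `N(r)` of solutions modulo `pʳ` satisfies
`N(r+2) = p^(2r+4) - p^(2r+2) + p³ N(r)`, with `N(0) = 1` and `N(1) = p²`.
-/

theorem Nat.card_subtype_eq_card_and_add_card_and_not {α : Type*} [Finite α] (P Q : α → Prop) :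
    Nat.card {a // P a} = Nat.card {a // P a ∧ Q a} + Nat.card {a // P a ∧ ¬Q a} := by
  classical
  rw [← Nat.card_sum]
  exact Nat.card_congr ((Equiv.sumCompl fun a : {a // P a} => Q a).symm.trans
    (Equiv.sumCongr (Equiv.subtypeSubtypeEquivSubtypeInter P Q)
      (Equiv.subtypeSubtypeEquivSubtypeInter P fun a => ¬Q a)))

namespace AddMonoidHom

variable {G H : Type*} [AddGroup G] [AddGroup H]

theorem natCard_subtype_comp_of_surjective (f : G →+ H) (hf : Function.Surjective f)
    (P : H → Prop) : Nat.card {g // P (f g)} = Nat.card {h // P h} * Nat.card f.ker :=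
  calc Nat.card {g // P (f g)} = Nat.card (Σ h : {h // P h}, {g // f g = h}) :=
        (Nat.card_congr (Equiv.sigmaSubtypeFiberEquivSubtype f fun _ => Iff.rfl)).symm
    _ = Nat.card ({h // P h} × f.ker) := Nat.card_congr
        ((Equiv.sigmaCongrRight fun h : {h // P h} => f.fiberEquivKerOfSurjective hf h.1).trans
          (Equiv.sigmaEquivProd _ _))
    _ = Nat.card {h // P h} * Nat.card f.ker := Nat.card_prod _ _

theorem natCard_eq_mul_natCard_ker (f : G →+ H) (hf : Function.Surjective f) :
    Nat.card G = Nat.card H * Nat.card f.ker := by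
  simpa only [Nat.card_congr (Equiv.subtypeUnivEquiv fun _ : G => trivial),
    Nat.card_congr (Equiv.subtypeUnivEquiv fun _ : H => trivial)]
    using f.natCard_subtype_comp_of_surjective hf fun _ => True

end AddMonoidHom

theorem isUnit_iff_of_mul_eq_sq {M : Type*} [CommMonoid M] {x b c : M} (h : b * c = x ^ 2) :
    IsUnit x ↔ IsUnit b ∧ IsUnit c := by
  rw [← isUnit_pow_iff two_ne_zero, ← h, IsUnit.mul_iff]

/-- `(x, b, c)` stands for the traceless matrix `!![x, -b; c, -x]`, whose determinant is
`b * c - x ^ 2`. -/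
abbrev NilCone (R : Type*) [CommRing R] := {v : R × R × R // v.2.1 * v.2.2 = v.1 ^ 2}

def Matrix.SpecialLinearGroup.traceEquivNilCone {R : Type*} [CommRing R] {u : R}
    (hu : u ^ 2 = 1) :
    {γ : Matrix.SpecialLinearGroup (Fin 2) R //
      Matrix.trace (γ : Matrix (Fin 2) (Fin 2) R) = 2 * u} ≃ NilCone R where
  toFun γ := ⟨(γ.1 0 0 - u, -γ.1 0 1, γ.1 1 0), by
    obtain ⟨⟨M, hdet⟩, htr⟩ := γ
    rw [Matrix.det_fin_two] at hdet
    rw [Matrix.trace_fin_two] at htr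
    dsimp only
    linear_combination hdet - M 0 0 * htr - hu⟩
  invFun v := ⟨⟨!![u + v.1.1, -v.1.2.1; v.1.2.2, u - v.1.1], by
    rw [Matrix.det_fin_two_of]
    linear_combination v.2 + hu⟩, by
    show Matrix.trace !![u + v.1.1, -v.1.2.1; v.1.2.2, u - v.1.1] = 2 * u
    rw [Matrix.trace_fin_two_of]
    ring⟩
  left_inv := by
    rintro ⟨⟨M, hdet⟩, htr⟩
    rw [Matrix.trace_fin_two] at htr
    ext i j
    fin_cases i <;> fin_cases j <;> simp
    linear_combination -htr
  right_inv := by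
    rintro ⟨⟨x, b, c⟩, h⟩
    simp

theorem exists_two_mul_eq_and_sq_eq_one {R : Type*} [CommRing R] (h2 : IsUnit (2 : R)) {t : R}
    (ht : t ^ 2 = 4) : ∃ u, 2 * u = t ∧ u ^ 2 = 1 := by
  obtain ⟨w, hw⟩ := h2
  refine ⟨↑w⁻¹ * t, by rw [← mul_assoc, ← hw, w.mul_inv, one_mul], ?_⟩
  rw [mul_pow, ht, show (4 : R) = 2 ^ 2 by norm_num, ← hw, ← mul_pow, w.inv_mul, one_pow]

section NilCone

variable (R : Type*) [CommRing R]

noncomputable def nilConeUnitEquiv :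
    {v : R × R × R // v.2.1 * v.2.2 = v.1 ^ 2 ∧ IsUnit v.2.2} ≃ R × Rˣ where
  toFun v := (v.1.1, v.2.2.unit)
  invFun w := ⟨(w.1, w.1 ^ 2 * ↑w.2⁻¹, w.2), by simp, w.2.isUnit⟩
  left_inv := by
    rintro ⟨⟨x, b, c⟩, h, hc⟩
    ext <;> simp [← h, mul_assoc]
  right_inv w := by ext <;> simp

noncomputable def nilConeNotUnitEquiv :
    {v : R × R × R // v.2.1 * v.2.2 = v.1 ^ 2 ∧ IsUnit v.2.1 ∧ ¬IsUnit v.2.2} ≃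
      {x : R // ¬IsUnit x} × Rˣ where
  toFun v :=
    (⟨v.1.1, fun hx => v.2.2.2 ((isUnit_iff_of_mul_eq_sq v.2.1).1 hx).2⟩, v.2.2.1.unit)
  invFun w := by
    refine ⟨(w.1, w.2, w.1.1 ^ 2 * ↑w.2⁻¹), ?_, w.2.isUnit, fun hc => w.1.2 ?_⟩
    · simp [mul_comm]
    · exact (isUnit_iff_of_mul_eq_sq (by simp [mul_comm])).2 ⟨w.2.isUnit, hc⟩
  left_inv := by
    rintro ⟨⟨x, b, c⟩, h, hb, hc⟩
    ext <;> simp [← h, mul_comm b, mul_assoc]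
  right_inv w := by ext <;> simp

theorem natCard_nilCone [Finite R] :
    Nat.card (NilCone R) = (Nat.card R + Nat.card {x : R // ¬IsUnit x}) * Nat.card Rˣ +
      Nat.card {v : R × R × R // v.2.1 * v.2.2 = v.1 ^ 2 ∧ ¬IsUnit v.2.1 ∧ ¬IsUnit v.2.2} := by
  rw [Nat.card_subtype_eq_card_and_add_card_and_not _ fun v : R × R × R => IsUnit v.2.2,
    Nat.card_subtype_eq_card_and_add_card_and_not
      (fun v : R × R × R => v.2.1 * v.2.2 = v.1 ^ 2 ∧ ¬IsUnit v.2.2) fun v => IsUnit v.2.1,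
    Nat.card_congr (nilConeUnitEquiv R), Nat.card_prod,
    Nat.card_congr ((Equiv.subtypeEquivRight fun _ => by tauto).trans (nilConeNotUnitEquiv R)),
    Nat.card_prod, Nat.card_congr (Equiv.subtypeEquivRight (q := fun v : R × R × R =>
      v.2.1 * v.2.2 = v.1 ^ 2 ∧ ¬IsUnit v.2.1 ∧ ¬IsUnit v.2.2) fun _ => by tauto)]
  ring

theorem natCard_nilCone_of_subsingleton [Subsingleton R] : Nat.card (NilCone R) = 1 :=
  Nat.card_eq_one_iff_exists.2 ⟨⟨0, by simp⟩, fun _ => Subsingleton.elim _ _⟩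

end NilCone

theorem natCard_nonunits_nilCone_of_field (K : Type*) [Field K] :
    Nat.card {v : K × K × K // v.2.1 * v.2.2 = v.1 ^ 2 ∧ ¬IsUnit v.2.1 ∧ ¬IsUnit v.2.2} =
      1 := by
  refine Nat.card_eq_one_iff_exists.2 ⟨⟨0, by simp⟩, ?_⟩
  rintro ⟨⟨x, b, c⟩, h, hb, hc⟩
  obtain rfl : b = 0 := not_not.1 (mt isUnit_iff_ne_zero.2 hb)
  obtain rfl : c = 0 := not_not.1 (mt isUnit_iff_ne_zero.2 hc)
  obtain rfl : x = 0 := pow_eq_zero_iff two_ne_zero |>.1 (by simpa using h.symm)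
  rfl

namespace ZMod

variable (p : ℕ)

def mulPrime (k : ℕ) (y : ZMod (p ^ k)) : ZMod (p ^ (k + 1)) :=
  ((p * y.val : ℕ) : ZMod (p ^ (k + 1)))

def castPowSucc (r : ℕ) : ZMod (p ^ (r + 1)) →+* ZMod (p ^ r) :=
  castHom (pow_dvd_pow p r.le_succ) (ZMod (p ^ r))

theorem castPowSucc_surjective (r : ℕ) : Function.Surjective (castPowSucc p r) :=
  castHom_surjective _

variable {p} [Fact p.Prime]

theorem isUnit_prime_pow_succ_iff {k : ℕ} (x : ZMod (p ^ (k + 1))) :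
    IsUnit x ↔ ¬p ∣ x.val := by
  conv_lhs => rw [← natCast_zmod_val x]
  rw [isUnit_iff_coprime, Nat.coprime_pow_right_iff k.succ_pos, Nat.coprime_comm,
    Nat.Prime.coprime_iff_not_dvd Fact.out]

theorem mulPrime_injective (k : ℕ) : Function.Injective (mulPrime p k) := by
  intro y z h
  rwa [mulPrime, mulPrime, natCast_eq_natCast_iff, pow_succ', Nat.ModEq.mul_left_cancel_iff'
    (Fact.out : p.Prime).ne_zero, ← natCast_eq_natCast_iff, natCast_zmod_val,
    natCast_zmod_val] at h

theorem range_mulPrime (k : ℕ) : Set.range (mulPrime p k) = {x | ¬IsUnit x} := by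
  ext x
  simp only [Set.mem_range, Set.mem_ofPred_eq, isUnit_prime_pow_succ_iff, not_not]
  constructor
  · rintro ⟨y, rfl⟩
    rw [mulPrime, val_natCast]
    exact (Nat.dvd_mod_iff (dvd_pow_self p k.succ_ne_zero)).2 (dvd_mul_right _ _)
  · rintro ⟨m, hm⟩
    have hlt : m < p ^ k := by
      have := x.val_lt
      rw [hm, pow_succ'] at this
      exact Nat.lt_of_mul_lt_mul_left this
    refine ⟨m, ?_⟩
    rw [mulPrime, val_cast_of_lt hlt, ← hm, natCast_zmod_val]

theorem not_isUnit_mulPrime {k : ℕ} (y : ZMod (p ^ k)) : ¬IsUnit (mulPrime p k y) := by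
  have h : mulPrime p k y ∈ Set.range (mulPrime p k) := ⟨y, rfl⟩
  rwa [range_mulPrime] at h

theorem natCard_nonunits_prime_pow (k : ℕ) :
    Nat.card {x : ZMod (p ^ (k + 1)) // ¬IsUnit x} = p ^ k := by
  rw [← Set.coe_ofPred, ← range_mulPrime, Nat.card_range_of_injective (mulPrime_injective k),
    Nat.card_zmod]

theorem natCard_units_prime_pow (k : ℕ) : Nat.card (ZMod (p ^ (k + 1)))ˣ = p ^ k * (p - 1) := by
  rw [Nat.card_eq_fintype_card, card_units_eq_totient, Nat.totient_prime_pow_succ Fact.out]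

theorem mulPrime_mul_eq_sq_iff {r : ℕ} (x b c : ZMod (p ^ (r + 1))) :
    mulPrime p (r + 1) b * mulPrime p (r + 1) c = mulPrime p (r + 1) x ^ 2 ↔
      castPowSucc p r b * castPowSucc p r c = castPowSucc p r x ^ 2 := by
  simp only [mulPrime, castPowSucc, castHom_apply, cast_eq_val]
  simp only [← Nat.cast_mul, ← Nat.cast_pow, natCast_eq_natCast_iff]
  rw [show p ^ (r + 1 + 1) = p * p * p ^ r by ring,
    show p * b.val * (p * c.val) = p * p * (b.val * c.val) by ring,
    show (p * x.val) ^ 2 = p * p * x.val ^ 2 by ring]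
  have hp : p ≠ 0 := (Fact.out : p.Prime).ne_zero
  exact Nat.ModEq.mul_left_cancel_iff' (mul_ne_zero hp hp)

end ZMod

section PrimePower

variable (p : ℕ) [Fact p.Prime]

theorem natCard_subtype_comp_castPowSucc (r : ℕ)
    (P : ZMod (p ^ r) × ZMod (p ^ r) × ZMod (p ^ r) → Prop) :
    Nat.card {w : ZMod (p ^ (r + 1)) × ZMod (p ^ (r + 1)) × ZMod (p ^ (r + 1)) //
      P (ZMod.castPowSucc p r w.1, ZMod.castPowSucc p r w.2.1, ZMod.castPowSucc p r w.2.2)} =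
      p ^ 3 * Nat.card {v // P v} := by
  set π := ZMod.castPowSucc p r
  let f := π.toAddMonoidHom.prodMap (π.toAddMonoidHom.prodMap π.toAddMonoidHom)
  have hπ := ZMod.castPowSucc_surjective p r
  have hf : Function.Surjective f := hπ.prodMap (hπ.prodMap hπ)
  have hker : Nat.card f.ker = p ^ 3 := by
    have h := f.natCard_eq_mul_natCard_ker hf
    simp only [Nat.card_prod, Nat.card_zmod] at h
    have hp := (Fact.out : p.Prime).pos
    apply Nat.eq_of_mul_eq_mul_left (show 0 < p ^ r * (p ^ r * p ^ r) by positivity)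
    rw [← h]
    ring
  exact (f.natCard_subtype_comp_of_surjective hf P).trans (by rw [hker, mul_comm])

theorem natCard_nonunits_nilCone_zmod_prime_pow_add_two (r : ℕ) :
    Nat.card {v : ZMod (p ^ (r + 2)) × ZMod (p ^ (r + 2)) × ZMod (p ^ (r + 2)) //
      v.2.1 * v.2.2 = v.1 ^ 2 ∧ ¬IsUnit v.2.1 ∧ ¬IsUnit v.2.2} =
      p ^ 3 * Nat.card (NilCone (ZMod (p ^ r))) := by
  let μ := ZMod.mulPrime p (r + 1)
  let F (w : {w : ZMod (p ^ (r + 1)) × ZMod (p ^ (r + 1)) × ZMod (p ^ (r + 1)) //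
      ZMod.castPowSucc p r w.2.1 * ZMod.castPowSucc p r w.2.2 = ZMod.castPowSucc p r w.1 ^ 2}) :
      {v : ZMod (p ^ (r + 2)) × ZMod (p ^ (r + 2)) × ZMod (p ^ (r + 2)) //
        v.2.1 * v.2.2 = v.1 ^ 2 ∧ ¬IsUnit v.2.1 ∧ ¬IsUnit v.2.2} :=
    ⟨(μ w.1.1, μ w.1.2.1, μ w.1.2.2), (ZMod.mulPrime_mul_eq_sq_iff _ _ _).2 w.2,
      ZMod.not_isUnit_mulPrime _, ZMod.not_isUnit_mulPrime _⟩
  have hF : Function.Bijective F := by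
    constructor
    · rintro ⟨⟨x, b, c⟩, _⟩ ⟨⟨x', b', c'⟩, _⟩ h
      have hμ := ZMod.mulPrime_injective (p := p) (r + 1)
      simp only [F, Subtype.mk.injEq, Prod.mk.injEq] at h
      simp only [Subtype.mk.injEq, Prod.mk.injEq]
      exact ⟨hμ h.1, hμ h.2.1, hμ h.2.2⟩
    · rintro ⟨⟨x, b, c⟩, h, hb, hc⟩
      have hx : ¬IsUnit x := fun hx => hb ((isUnit_iff_of_mul_eq_sq h).1 hx).1
      have hrange := ZMod.range_mulPrime (p := p) (r + 1)
      obtain ⟨x', rfl⟩ : x ∈ Set.range μ := hrange.symm ▸ hx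
      obtain ⟨b', rfl⟩ : b ∈ Set.range μ := hrange.symm ▸ hb
      obtain ⟨c', rfl⟩ : c ∈ Set.range μ := hrange.symm ▸ hc
      exact ⟨⟨(x', b', c'), (ZMod.mulPrime_mul_eq_sq_iff _ _ _).1 h⟩, rfl⟩
  rw [← Nat.card_congr (Equiv.ofBijective F hF)]
  exact natCard_subtype_comp_castPowSucc p r fun v => v.2.1 * v.2.2 = v.1 ^ 2

theorem natCard_nilCone_zmod_prime_pow_succ (k : ℕ) :
    Nat.card (NilCone (ZMod (p ^ (k + 1)))) = (p ^ (k + 1) + p ^ k) * (p ^ k * (p - 1)) +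
      Nat.card {v : ZMod (p ^ (k + 1)) × ZMod (p ^ (k + 1)) × ZMod (p ^ (k + 1)) //
        v.2.1 * v.2.2 = v.1 ^ 2 ∧ ¬IsUnit v.2.1 ∧ ¬IsUnit v.2.2} := by
  rw [natCard_nilCone, Nat.card_zmod, ZMod.natCard_nonunits_prime_pow,
    ZMod.natCard_units_prime_pow]

theorem cast_natCard_nilCone_zmod_prime_pow_succ : ∀ s : ℕ,
    (Nat.card (NilCone (ZMod (p ^ (s + 1)))) : ℤ) =
      p ^ (2 * s + 2) + p ^ (2 * s + 1) - p ^ ((3 * s + 2) / 2)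
  | 0 => by
    have : Fact (p ^ (0 + 1)).Prime := ⟨by rw [pow_one]; exact Fact.out⟩
    rw [natCard_nilCone_zmod_prime_pow_succ, natCard_nonunits_nilCone_of_field]
    push_cast [Nat.cast_sub (Fact.out : p.Prime).one_le]
    ring
  | 1 => by
    rw [natCard_nilCone_zmod_prime_pow_succ, natCard_nonunits_nilCone_zmod_prime_pow_add_two p 0,
      pow_zero, natCard_nilCone_of_subsingleton]
    push_cast [Nat.cast_sub (Fact.out : p.Prime).one_le]
    ring
  | s + 2 => by
    rw [natCard_nilCone_zmod_prime_pow_succ,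
      natCard_nonunits_nilCone_zmod_prime_pow_add_two p (s + 1)]
    push_cast [Nat.cast_sub (Fact.out : p.Prime).one_le, cast_natCard_nilCone_zmod_prime_pow_succ s]
    rw [show (3 * (s + 2) + 2) / 2 = (3 * s + 2) / 2 + 3 by omega, pow_add]
    ring

theorem natCard_nilCone_zmod_prime_pow (r : ℕ) :
    Nat.card (NilCone (ZMod (p ^ r))) = p ^ (2 * r) + p ^ (2 * r - 1) - p ^ ((3 * r - 1) / 2) := by
  cases r with
  | zero =>
    rw [pow_zero, natCard_nilCone_of_subsingleton]
    simp
  | succ s =>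
    have h := cast_natCard_nilCone_zmod_prime_pow_succ p s
    rw [show 2 * (s + 1) - 1 = 2 * s + 1 by omega, show 2 * (s + 1) = 2 * s + 2 by ring,
      show (3 * (s + 1) - 1) / 2 = (3 * s + 2) / 2 by omega]
    have hle : p ^ ((3 * s + 2) / 2) ≤ p ^ (2 * s + 2) + p ^ (2 * s + 1) :=
      (Nat.pow_le_pow_right (Fact.out : p.Prime).pos (by omega)).trans le_add_self
    zify [hle]
    exact h

end PrimePower

theorem stmt_8_general (p : ℕ) [Fact p.Prime] (hp : Odd p) (r : ℕ) (t : ℤ)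
    (ht : (p : ℤ) ^ r ∣ t ^ 2 - 4) :
    Nat.card {γ : Matrix.SpecialLinearGroup (Fin 2) (ZMod (p ^ r)) //
        Matrix.trace (γ : Matrix (Fin 2) (Fin 2) (ZMod (p ^ r))) = (t : ZMod (p ^ r))}
      = p ^ (2 * r) + p ^ (2 * r - 1) - p ^ ((3 * r - 1) / 2) := by
  have h2 : IsUnit (2 : ZMod (p ^ r)) := by
    simpa using (ZMod.isUnit_iff_coprime 2 (p ^ r)).2 (Nat.coprime_two_left.2 hp.pow)
  have ht4 : (t : ZMod (p ^ r)) ^ 2 = 4 := by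
    have h := (ZMod.intCast_zmod_eq_zero_iff_dvd (t ^ 2 - 4) (p ^ r)).2 (by exact_mod_cast ht)
    push_cast at h
    exact sub_eq_zero.1 h
  obtain ⟨u, htu, hu⟩ := exists_two_mul_eq_and_sq_eq_one h2 ht4
  rw [← htu, Nat.card_congr (Matrix.SpecialLinearGroup.traceEquivNilCone hu),
    natCard_nilCone_zmod_prime_pow]

theorem stmt_8 (p : ℕ) [Fact p.Prime] (hp : Odd p) (r : ℕ) (hr : 1 ≤ r) (t : ℤ)
    (ht : (p : ℤ) ^ r ∣ t ^ 2 - 4) :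
    Nat.card {γ : Matrix.SpecialLinearGroup (Fin 2) (ZMod (p ^ r)) //
        Matrix.trace (γ : Matrix (Fin 2) (Fin 2) (ZMod (p ^ r))) = (t : ZMod (p ^ r))}
      = p ^ (2 * r) + p ^ (2 * r - 1) - p ^ ((3 * r - 1) / 2) :=
  stmt_8_general p hp r t ht
end

section
/- Let p be an odd prime, r ≥ 1, and t an integer such that p^l exactly divides t² − 4 for some even l with 2 ≤ l < r, and (t²−4)/p^l is a quadratic non-residue mod p. Then the number of matrices γ ∈ SL₂(Z/p^rZ) with trace γ ≡ t (mod p^r) equals p^{2r} + p^{2r−1} − 2p^{2r−l/2−1}. -/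
open Finset
open scoped Classical

section helpers
variable {p : ℕ} [hp : Fact p.Prime] {r : ℕ}

lemma dvd_transfer (k : ℕ) (hkr : k ≤ r) (Z : ℤ) :
    (p : ZMod (p^r))^k ∣ (Z : ZMod (p^r)) ↔ (p:ℤ)^k ∣ Z := by
  constructor
  · rintro ⟨y, hy⟩
    have h0 : (((Z - (p:ℤ)^k * (y.val : ℤ)) : ℤ) : ZMod (p^r)) = 0 := by
      push_cast
      rw [ZMod.natCast_val, ZMod.cast_id, ← hy]
      ring
    have h1 := (ZMod.intCast_zmod_eq_zero_iff_dvd _ _).mp h0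
    have hpk : ((p:ℤ)^k) ∣ ((p^r : ℕ) : ℤ) := by
      push_cast; exact pow_dvd_pow _ hkr
    have h2 : (p:ℤ)^k ∣ Z - (p:ℤ)^k * (y.val : ℤ) := dvd_trans hpk h1
    have := dvd_add h2 (Dvd.intro (y.val : ℤ) rfl)
    simpa using this
  · rintro ⟨W, rfl⟩
    exact ⟨(W : ZMod (p^r)), by push_cast; ring⟩

lemma dvd_val_iff (k : ℕ) (hkr : k ≤ r) (b : ZMod (p^r)) :
    (p : ZMod (p^r))^k ∣ b ↔ p^k ∣ b.val := by
  have h1 : ((b.val : ℤ) : ZMod (p^r)) = b := by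
    push_cast; rw [ZMod.natCast_val, ZMod.cast_id]
  conv_lhs => rw [← h1]
  rw [dvd_transfer k hkr]
  exact_mod_cast Int.natCast_dvd_natCast

end helpers

section counts
variable {p : ℕ} [hp : Fact p.Prime] {r : ℕ}

lemma val_cast_eq_self (x : ZMod (p^r)) : ((x.val : ℕ) : ZMod (p^r)) = x := by
  rw [ZMod.natCast_val, ZMod.cast_id]

lemma count_dvd_val [NeZero (p^r)] (k : ℕ) (hkr : k ≤ r) :
    (univ.filter (fun x : ZMod (p^r) => p^k ∣ x.val)).card = p^(r-k) := by
  have hp1 : 1 < p := hp.out.one_lt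
  have hcard : (Finset.range (p^(r-k))).card = p^(r-k) := Finset.card_range _
  rw [← hcard]
  apply Finset.card_bij' (fun x _ => x.val / p^k) (fun i _ => ((p^k * i : ℕ) : ZMod (p^r)))
  · intro x hx
    simp only [mem_filter, mem_univ, true_and] at hx
    simp only [mem_range]
    have hv : x.val < p^r := ZMod.val_lt x
    obtain ⟨c, hc⟩ := hx
    rw [hc, Nat.mul_div_cancel_left _ (Nat.pow_pos hp.out.pos)]
    by_contra h
    push_neg at h
    have : p^k * p^(r-k) ≤ p^k * c := Nat.mul_le_mul_left _ h
    rw [← pow_add, Nat.add_sub_cancel' hkr] at this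
    omega
  · intro i hi
    simp only [mem_range] at hi
    simp only [mem_filter, mem_univ, true_and]
    have hlt : p^k * i < p^r := by
      calc p^k * i < p^k * p^(r-k) :=
            mul_lt_mul_of_pos_left hi (Nat.pow_pos hp.out.pos)
        _ = p^r := by rw [← pow_add, Nat.add_sub_cancel' hkr]
    rw [ZMod.val_cast_of_lt hlt]
    exact Dvd.intro _ rfl
  · intro x hx
    simp only [mem_filter, mem_univ, true_and] at hx
    rw [Nat.mul_div_cancel' hx, val_cast_eq_self]
  · intro i hi
    simp only [mem_range] at hi
    have hlt : p^k * i < p^r := by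
      calc p^k * i < p^k * p^(r-k) :=
            mul_lt_mul_of_pos_left hi (Nat.pow_pos hp.out.pos)
        _ = p^r := by rw [← pow_add, Nat.add_sub_cancel' hkr]
    rw [ZMod.val_cast_of_lt hlt, Nat.mul_div_cancel_left _ (Nat.pow_pos hp.out.pos : 0 < p^k)]

lemma count_dvd [NeZero (p^r)] (k : ℕ) (hkr : k ≤ r) :
    (univ.filter (fun x : ZMod (p^r) => (p : ZMod (p^r))^k ∣ x)).card = p^(r-k) := by
  rw [← count_dvd_val k hkr]
  congr 1
  ext x
  simp [dvd_val_iff k hkr]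

end counts

section counts2
variable {p : ℕ} [hp : Fact p.Prime] {r : ℕ}

lemma mul_pow_eq_zero_iff [NeZero (p^r)] (j : ℕ) (hjr : j ≤ r) (c : ZMod (p^r)) :
    (p:ZMod (p^r))^j * c = 0 ↔ (p:ZMod (p^r))^(r-j) ∣ c := by
  have h1 : (p:ZMod (p^r))^j * c = ((p^j * c.val : ℕ) : ZMod (p^r)) := by
    push_cast
    rw [val_cast_eq_self]
  rw [h1, ZMod.natCast_eq_zero_iff, dvd_val_iff (r-j) (Nat.sub_le r j)]
  constructor
  · intro h
    have h2 : p^j * p^(r-j) ∣ p^j * c.val := by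
      rwa [← pow_add, Nat.add_sub_cancel' hjr]
    exact (mul_dvd_mul_iff_left (a := p^j) (pow_ne_zero _ hp.out.pos.ne')).mp h2
  · intro h
    have h2 : p^j * p^(r-j) ∣ p^j * c.val := mul_dvd_mul_left _ h
    rwa [← pow_add, Nat.add_sub_cancel' hjr] at h2

lemma count_ker [NeZero (p^r)] (j : ℕ) (hjr : j ≤ r) :
    (univ.filter fun c : ZMod (p^r) => (p:ZMod (p^r))^j * c = 0).card = p^j := by
  have : ∀ c : ZMod (p^r), ((p:ZMod (p^r))^j * c = 0) ↔ (p:ZMod (p^r))^(r-j) ∣ c :=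
    mul_pow_eq_zero_iff j hjr
  calc (univ.filter fun c : ZMod (p^r) => (p:ZMod (p^r))^j * c = 0).card
      = (univ.filter fun c : ZMod (p^r) => (p:ZMod (p^r))^(r-j) ∣ c).card := by
        congr 1; ext c; simp [this c]
    _ = p^(r-(r-j)) := count_dvd (r-j) (Nat.sub_le r j)
    _ = p^j := by rw [Nat.sub_sub_self hjr]

lemma count_solutions [NeZero (p^r)] (b m : ZMod (p^r)) :
    (univ.filter fun c => b*c = m).card
      = if b ∣ m then (univ.filter fun c => b*c = 0).card else 0 := by
  split_ifs with h
  · obtain ⟨c₀, rfl⟩ := h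
    apply Finset.card_bij' (fun c _ => c - c₀) (fun c _ => c + c₀)
    · intro c hc
      simp only [mem_filter, mem_univ, true_and] at hc ⊢
      rw [mul_sub, hc, sub_self]
    · intro c hc
      simp only [mem_filter, mem_univ, true_and] at hc ⊢
      rw [mul_add, hc, zero_add]
    · intro c _; ring
    · intro c _; ring
  · rw [Finset.card_eq_zero, Finset.filter_eq_empty_iff]
    intro c _
    exact fun hc => h ⟨c, hc.symm⟩

end counts2

section valn
variable (p r : ℕ) [hp : Fact p.Prime]

noncomputable def jv (b : ZMod (p^r)) : ℕ := if b = 0 then r else padicValNat p b.val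

variable {p r}

lemma jv_le [NeZero (p^r)] (b : ZMod (p^r)) : jv p r b ≤ r := by
  unfold jv
  split_ifs with h
  · exact le_refl r
  · have hval : b.val ≠ 0 := fun hv => h (by rwa [ZMod.val_eq_zero] at hv)
    have h1 : p^(padicValNat p b.val) ∣ b.val := pow_padicValNat_dvd
    have h2 : p^(padicValNat p b.val) ≤ b.val := Nat.le_of_dvd (Nat.pos_of_ne_zero hval) h1
    have h3 : b.val < p^r := ZMod.val_lt b
    have := (Nat.pow_lt_pow_iff_right hp.out.one_lt).mp (lt_of_le_of_lt h2 h3)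
    omega

lemma jv_spec [NeZero (p^r)] (b : ZMod (p^r)) (hb : b ≠ 0) :
    jv p r b < r ∧ ∃ u : (ZMod (p^r))ˣ, b = (p:ZMod (p^r))^(jv p r b) * u := by
  have hval : b.val ≠ 0 := fun hv => hb (by rwa [ZMod.val_eq_zero] at hv)
  have hj : jv p r b = padicValNat p b.val := by unfold jv; simp [hb]
  have h1 : p^(jv p r b) ∣ b.val := by rw [hj]; exact pow_padicValNat_dvd
  have hnd : ¬ p ∣ b.val / p^(jv p r b) := by
    intro hd
    have : p^(jv p r b + 1) ∣ b.val := by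
      obtain ⟨w, hw⟩ := hd
      obtain ⟨v, hv⟩ := h1
      rw [hv] at hw ⊢
      rw [Nat.mul_div_cancel_left _ (Nat.pow_pos hp.out.pos)] at hw
      exact ⟨w, by rw [hw]; ring⟩
    rw [hj] at this
    exact pow_succ_padicValNat_not_dvd hval this
  have hlt : jv p r b < r := by
    have h2 : p^(jv p r b) ≤ b.val := Nat.le_of_dvd (Nat.pos_of_ne_zero hval) h1
    have h3 : b.val < p^r := ZMod.val_lt b
    have := (Nat.pow_lt_pow_iff_right hp.out.one_lt).mp (lt_of_le_of_lt h2 h3)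
    omega
  refine ⟨hlt, ?_⟩
  set w := b.val / p^(jv p r b) with hw
  have hbw : b.val = p^(jv p r b) * w := (Nat.mul_div_cancel' h1).symm
  have hcop : Nat.Coprime w (p^r) :=
    Nat.Coprime.pow_right _ (Nat.coprime_comm.mp ((hp.out.coprime_iff_not_dvd).mpr hnd))
  have hu : IsUnit (w : ZMod (p^r)) := (ZMod.isUnit_iff_coprime w (p^r)).mpr hcop
  refine ⟨hu.unit, ?_⟩
  rw [IsUnit.unit_spec]
  calc b = ((b.val : ℕ) : ZMod (p^r)) := (val_cast_eq_self b).symm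
    _ = ((p^(jv p r b) * w : ℕ) : ZMod (p^r)) := by rw [← hbw]
    _ = (p:ZMod (p^r))^(jv p r b) * (w : ZMod (p^r)) := by push_cast; ring

end valn

section core
variable {p : ℕ} [hp : Fact p.Prime]

lemma int_sq_dvd (j : ℕ) (X : ℤ) : (p:ℤ)^j ∣ X^2 ↔ (p:ℤ)^((j+1)/2) ∣ X := by
  rcases eq_or_ne X 0 with rfl | hX
  · simp
  · have hX2 : X^2 ≠ 0 := pow_ne_zero _ hX
    have h1 : ((p:ℤ)^j ∣ X^2) ↔ p^j ∣ (X^2).natAbs := by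
      rw [← Int.natAbs_dvd_natAbs]
      simp [Int.natAbs_pow]
    have h2 : ((p:ℤ)^((j+1)/2) ∣ X) ↔ p^((j+1)/2) ∣ X.natAbs := by
      rw [← Int.natAbs_dvd_natAbs]
      simp [Int.natAbs_pow]
    rw [h1, h2]
    have hXa : X.natAbs ≠ 0 := Int.natAbs_ne_zero.mpr hX
    rw [Int.natAbs_pow]
    rw [Nat.Prime.pow_dvd_iff_le_factorization hp.out (pow_ne_zero _ hXa),
        Nat.Prime.pow_dvd_iff_le_factorization hp.out hXa,
        Nat.factorization_pow]
    simp only [Finsupp.smul_apply, smul_eq_mul]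
    omega

variable {t : ℤ} {l : ℕ}

lemma core1 (hdvd : (p:ℤ)^l ∣ t^2-4) (j : ℕ) (hj : j ≤ l) (X : ℤ) :
    ((p:ℤ)^j ∣ X^2 - (t^2-4)) ↔ (p:ℤ)^((j+1)/2) ∣ X := by
  have hD : (p:ℤ)^j ∣ t^2-4 := dvd_trans (pow_dvd_pow _ hj) hdvd
  rw [← int_sq_dvd]
  constructor
  · intro h
    have := dvd_add h hD
    simpa using this
  · intro h
    exact dvd_sub h hD

lemma core2 (hleven : Even l)
    (hdvd : (p:ℤ)^l ∣ t^2-4) (hndvd : ¬ (p:ℤ)^(l+1) ∣ t^2-4)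
    (hres : legendreSym p ((t^2-4) / (p:ℤ)^l) = -1) (X : ℤ) :
    ¬ (p:ℤ)^(l+1) ∣ X^2 - (t^2-4) := by
  intro h
  obtain ⟨s, hs⟩ := hleven
  have hsl : l = 2*s := by omega
  set D' : ℤ := (t^2-4) / (p:ℤ)^l with hD'
  have hDeq : (t^2-4) = (p:ℤ)^l * D' := (Int.mul_ediv_cancel' hdvd).symm
  have hXdvd : (p:ℤ)^s ∣ X := by
    have h1 : (p:ℤ)^l ∣ X^2 - (t^2-4) := dvd_trans (pow_dvd_pow _ (Nat.le_succ l)) h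
    have h2 : (p:ℤ)^l ∣ X^2 := by
      have := dvd_add h1 hdvd; simpa using this
    have := (int_sq_dvd l X).mp h2
    have hls : (l+1)/2 = s := by omega
    rwa [hls] at this
  obtain ⟨Y, hY⟩ := hXdvd
  have key : (p:ℤ)^l * ((p:ℤ) * 1) ∣ (p:ℤ)^l * (Y^2 - D') := by
    have e : X^2 - (t^2-4) = (p:ℤ)^l * (Y^2 - D') := by
      rw [hY, hDeq, hsl]; ring
    rw [← e]
    have : (p:ℤ)^(l+1) = (p:ℤ)^l * ((p:ℤ)*1) := by ring
    rw [← this]; exact h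
  have hpl : ((p:ℤ)^l) ≠ 0 := pow_ne_zero _ (by exact_mod_cast hp.out.pos.ne')
  have hYD : (p:ℤ) ∣ Y^2 - D' := by
    have := (mul_dvd_mul_iff_left hpl).mp key
    simpa using this
  have hpD' : ¬ (p:ℤ) ∣ D' := by
    intro hd
    apply hndvd
    rw [hDeq]
    obtain ⟨e, he⟩ := hd
    exact ⟨e, by rw [he]; ring⟩
  have hcast : ((D' : ℤ) : ZMod p) = ((Y : ℤ) : ZMod p)^2 := by
    have h0 : ((Y^2 - D' : ℤ) : ZMod p) = 0 := by
      rw [ZMod.intCast_zmod_eq_zero_iff_dvd]; exact_mod_cast hYD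
    push_cast at h0
    linear_combination -h0
  have hne : ((D' : ℤ) : ZMod p) ≠ 0 := by
    rw [Ne, ZMod.intCast_zmod_eq_zero_iff_dvd]
    exact_mod_cast hpD'
  have : legendreSym p D' = 1 := by
    rw [legendreSym.eq_one_iff p hne]
    exact ⟨((Y : ℤ) : ZMod p), by rw [hcast]; ring⟩
  rw [hres] at this
  norm_num at this

end core

section countA
variable {p : ℕ} [hp : Fact p.Prime] {r l : ℕ} {t : ℤ}

lemma p_ne_two (hodd : Odd p) : ¬ (p:ℕ) ∣ 4 := by
  intro h
  have h2 : p ∣ 2^2 := by norm_num at h ⊢; exact h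
  have := hp.out.dvd_of_dvd_pow h2
  have := (Nat.prime_dvd_prime_iff_eq hp.out Nat.prime_two).mp this
  rcases hodd with ⟨k, hk⟩
  omega

lemma cop4 (hodd : Odd p) (j : ℕ) : IsCoprime ((p:ℤ)^j) (4:ℤ) := by
  apply IsCoprime.pow_left
  rw [Int.isCoprime_iff_gcd_eq_one]
  have : Nat.Coprime p 4 := (hp.out.coprime_iff_not_dvd).mpr (p_ne_two hodd)
  simpa [Int.gcd] using this

lemma pointwise (hodd : Odd p) (j : ℕ) (hjr : j ≤ r) (a : ZMod (p^r)) :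
    ((p:ZMod (p^r))^j ∣ (a*((t : ZMod (p^r))-a) - 1)) ↔
      (p:ℤ)^j ∣ ((2*(a.val:ℤ) - t)^2 - (t^2 - 4)) := by
  set A : ℤ := (a.val : ℤ) with hA
  have ha : ((A : ℤ) : ZMod (p^r)) = a := by
    rw [hA]; push_cast; rw [val_cast_eq_self]
  have h1 : (a*((t : ZMod (p^r))-a) - 1) = ((A*(t-A) - 1 : ℤ) : ZMod (p^r)) := by
    push_cast [ha]; ring
  rw [h1, dvd_transfer j hjr]
  have e : (2*A - t)^2 - (t^2 - 4) = -4*(A*(t-A) - 1) := by ring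
  rw [e]
  constructor
  · intro h
    exact Dvd.dvd.mul_left h _
  · intro h
    have h' : (p:ℤ)^j ∣ 4*(A*(t-A) - 1) := by
      have := h.neg_right
      simpa using this
    exact (cop4 hodd j).dvd_of_dvd_mul_left h'
end countA

section countA2
variable {p : ℕ} [hp : Fact p.Prime] {r l : ℕ} {t : ℤ}

lemma unit2 [NeZero (p^r)] (hodd : Odd p) : IsUnit (2 : ZMod (p^r)) := by
  have hcop : Nat.Coprime 2 (p^r) :=
    Nat.Coprime.pow_right r (Nat.coprime_two_left.mpr hodd)
  have := (ZMod.isUnit_iff_coprime 2 (p^r)).mpr hcop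
  simpa using this

lemma count_shift [NeZero (p^r)] (hodd : Odd p) (k : ℕ) (hkr : k ≤ r) :
    (univ.filter fun a : ZMod (p^r) => (p:ZMod (p^r))^k ∣ (2*a - t)).card = p^(r-k) := by
  rw [← count_dvd (p := p) k hkr]
  have hu := unit2 (r := r) hodd
  set v := hu.unit with hv
  have hv2 : (v : ZMod (p^r)) = 2 := hu.unit_spec
  apply Finset.card_bij' (fun a _ => 2*a - (t : ZMod (p^r)))
      (fun x _ => (v⁻¹ : (ZMod (p^r))ˣ) * (x + t))
  · intro a ha
    simp only [mem_filter, mem_univ, true_and] at ha ⊢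
    exact ha
  · intro x hx
    simp only [mem_filter, mem_univ, true_and] at hx ⊢
    have h2 : (2 : ZMod (p^r)) * ((v⁻¹ : (ZMod (p^r))ˣ) * (x + t)) - t = x := by
      rw [← hv2, ← mul_assoc, Units.mul_inv, one_mul, add_sub_cancel_right]
    rw [h2]
    exact hx
  · intro a _
    rw [← hv2, sub_add_cancel, ← mul_assoc, Units.inv_mul, one_mul]
  · intro x _
    rw [← hv2, ← mul_assoc, Units.mul_inv, one_mul, add_sub_cancel_right]
end countA2

section countA3
variable {p : ℕ} [hp : Fact p.Prime] {r l : ℕ} {t : ℤ}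

lemma shift_cast (a : ZMod (p^r)) :
    ((2*(a.val:ℤ) - t : ℤ) : ZMod (p^r)) = 2*a - (t : ZMod (p^r)) := by
  push_cast
  rw [ZMod.natCast_val, ZMod.cast_id]

lemma count_a_le [NeZero (p^r)] (hodd : Odd p) (hdvd : (p:ℤ)^l ∣ t^2-4)
    (hlr : l < r) (j : ℕ) (hj : j ≤ l) :
    (univ.filter fun a : ZMod (p^r) =>
        (p:ZMod (p^r))^j ∣ (a*((t:ZMod (p^r))-a) - 1)).card = p^(r-(j+1)/2) := by
  have hjr : j ≤ r := le_trans hj hlr.le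
  have hk : (j+1)/2 ≤ r := by omega
  rw [← count_shift (t := t) hodd ((j+1)/2) hk]
  congr 1
  ext a
  simp only [mem_filter, mem_univ, true_and]
  rw [pointwise hodd j hjr a, core1 hdvd j hj, ← shift_cast (t := t) a,
    dvd_transfer ((j+1)/2) hk]

lemma count_a_gt [NeZero (p^r)] (hodd : Odd p) (hleven : Even l)
    (hdvd : (p:ℤ)^l ∣ t^2-4) (hndvd : ¬ (p:ℤ)^(l+1) ∣ t^2-4)
    (hres : legendreSym p ((t^2-4) / (p:ℤ)^l) = -1)
    (hlr : l < r) (j : ℕ) (hj : l < j) :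
    (univ.filter fun a : ZMod (p^r) =>
        (p:ZMod (p^r))^j ∣ (a*((t:ZMod (p^r))-a) - 1)).card = 0 := by
  rw [Finset.card_eq_zero, Finset.filter_eq_empty_iff]
  intro a _
  intro hdv
  have h1 : (p:ZMod (p^r))^(l+1) ∣ (a*((t:ZMod (p^r))-a) - 1) :=
    dvd_trans (pow_dvd_pow _ (by omega)) hdv
  have h2 := (pointwise hodd (l+1) (by omega) a).mp h1
  exact core2 hleven hdvd hndvd hres _ h2

end countA3

section sl2
variable (n : ℕ) [NeZero n]

noncomputable def sl2equiv (T : ZMod n) :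
    {γ : Matrix.SpecialLinearGroup (Fin 2) (ZMod n) //
        Matrix.trace (γ : Matrix (Fin 2) (Fin 2) (ZMod n)) = T} ≃
    {x : ZMod n × ZMod n × ZMod n // x.2.1 * x.2.2 = x.1 * (T - x.1) - 1} where
  toFun γ := ⟨((γ.1 : Matrix (Fin 2) (Fin 2) (ZMod n)) 0 0,
               (γ.1 : Matrix (Fin 2) (Fin 2) (ZMod n)) 0 1,
               (γ.1 : Matrix (Fin 2) (Fin 2) (ZMod n)) 1 0), by
    obtain ⟨⟨M, hdet⟩, htr⟩ := γ
    rw [Matrix.det_fin_two] at hdet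
    rw [Matrix.trace_fin_two] at htr
    simp only
    have h11 : M 1 1 = T - M 0 0 := by linear_combination htr
    rw [h11] at hdet
    linear_combination -hdet⟩
  invFun x := ⟨⟨!![x.1.1, x.1.2.1; x.1.2.2, T - x.1.1], by
      rw [Matrix.det_fin_two_of]
      linear_combination -x.2⟩, by
    rw [Matrix.trace_fin_two]
    simp⟩
  left_inv γ := by
    obtain ⟨⟨M, hdet⟩, htr⟩ := γ
    rw [Matrix.trace_fin_two] at htr
    replace htr : M 0 0 + M 1 1 = T := htr
    ext i j
    fin_cases i <;> fin_cases j <;> simp <;> linear_combination -htr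
  right_inv x := by
    obtain ⟨⟨a, b, c⟩, hx⟩ := x
    ext <;> simp

lemma sl2_count (T : ZMod n) :
    Nat.card {γ : Matrix.SpecialLinearGroup (Fin 2) (ZMod n) //
        Matrix.trace (γ : Matrix (Fin 2) (Fin 2) (ZMod n)) = T}
    = (univ.filter (fun x : ZMod n × ZMod n × ZMod n =>
        x.2.1 * x.2.2 = x.1 * (T - x.1) - 1)).card := by
  rw [Nat.card_congr (sl2equiv n T), Nat.card_eq_fintype_card, Fintype.card_subtype]

end sl2

section fibers
variable {p : ℕ} [hp : Fact p.Prime] {r : ℕ}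

lemma jv_eq_iff [NeZero (p^r)] (j : ℕ) (hj : j < r) (b : ZMod (p^r)) :
    jv p r b = j ↔ (p^j ∣ b.val ∧ ¬ p^(j+1) ∣ b.val) := by
  rcases eq_or_ne b 0 with rfl | hb
  · have h0 : (0 : ZMod (p^r)).val = 0 := ZMod.val_zero
    have hjv : jv p r (0 : ZMod (p^r)) = r := if_pos rfl
    rw [hjv]
    simp only [h0, dvd_zero, not_true, and_false, iff_false]
    omega
  · have hval : b.val ≠ 0 := fun hv => hb (by rwa [ZMod.val_eq_zero] at hv)
    have hj' : jv p r b = padicValNat p b.val := by unfold jv; simp [hb]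
    rw [hj']
    constructor
    · rintro rfl
      exact ⟨pow_padicValNat_dvd, pow_succ_padicValNat_not_dvd hval⟩
    · rintro ⟨h1, h2⟩
      have hf1 := (Nat.Prime.pow_dvd_iff_le_factorization hp.out hval).mp h1
      have hf2 : ¬ (j+1) ≤ b.val.factorization p := fun hle =>
        h2 ((Nat.Prime.pow_dvd_iff_le_factorization hp.out hval).mpr hle)
      have : b.val.factorization p = padicValNat p b.val := by
        rw [Nat.factorization_def _ hp.out]
      omega

lemma count_jv [NeZero (p^r)] (j : ℕ) (hj : j < r) :
    (univ.filter fun b : ZMod (p^r) => jv p r b = j).card = p^(r-j) - p^(r-j-1) := by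
  have h1 : (univ.filter fun b : ZMod (p^r) => jv p r b = j)
      = (univ.filter fun b : ZMod (p^r) => p^j ∣ b.val) \
        (univ.filter fun b : ZMod (p^r) => p^(j+1) ∣ b.val) := by
    ext b
    simp only [mem_sdiff, mem_filter, mem_univ, true_and]
    rw [jv_eq_iff j hj]
  have hsub : (univ.filter fun b : ZMod (p^r) => p^(j+1) ∣ b.val)
      ⊆ (univ.filter fun b : ZMod (p^r) => p^j ∣ b.val) := by
    intro b hb
    simp only [mem_filter, mem_univ, true_and] at hb ⊢
    exact dvd_trans (pow_dvd_pow _ (Nat.le_succ j)) hb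
  rw [h1, Finset.card_sdiff_of_subset hsub, count_dvd_val j hj.le, count_dvd_val (j+1) hj,
    Nat.sub_sub]

end fibers

section arith
lemma arith_int (p : ℕ) (hp2 : 2 ≤ p) : ∀ s : ℕ, 1 ≤ s → ∀ r : ℕ, 2*s < r →
    ((p:ℤ)^r - (p:ℤ)^(r-1)) * (∑ j ∈ Finset.range (2*s+1), (p:ℤ)^(r-(j+1)/2))
      = (p:ℤ)^(2*r) + (p:ℤ)^(2*r-1) - 2*(p:ℤ)^(2*r-s-1) := by
  intro s hs
  induction s with
  | zero => omega
  | succ s ih =>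
    intro r hr
    rcases Nat.eq_or_lt_of_le hs with h1 | h1
    · -- s + 1 = 1, i.e. s = 0
      have hs0 : s = 0 := by omega
      subst hs0
      simp only [Finset.sum_range_succ, Finset.sum_range_zero]
      norm_num
      have e1 : (p:ℤ)^r * (p:ℤ)^r = (p:ℤ)^(2*r) := by rw [← pow_add]; congr 1; omega
      have e2 : (p:ℤ)^r * (p:ℤ)^(r-1) = (p:ℤ)^(2*r-1) := by rw [← pow_add]; congr 1; omega
      have e3 : (p:ℤ)^(r-1) * (p:ℤ)^(r-1) = (p:ℤ)^(2*r-2) := by rw [← pow_add]; congr 1; omega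
      have e4 : 2*r - (0+1) - 1 = 2*r - 2 := by omega
      rw [e4]
      linear_combination e1 + e2 - 2*e3
    · -- 1 ≤ s
      have hs1 : 1 ≤ s := by omega
      have hr' : 2*s < r := by omega
      have ih' := ih hs1 r hr'
      have hsplit : (2*(s+1)+1) = (2*s+1) + 1 + 1 := by omega
      rw [hsplit, Finset.sum_range_succ, Finset.sum_range_succ]
      have hq1 : ((2*s+1)+1)/2 = s+1 := by omega
      have hq2 : ((2*s+1+1)+1)/2 = s+1 := by omega
      rw [hq1, hq2]
      have e1 : (p:ℤ)^r * (p:ℤ)^(r-(s+1)) = (p:ℤ)^(2*r-s-1) := by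
        rw [← pow_add]; congr 1; omega
      have e2 : (p:ℤ)^(r-1) * (p:ℤ)^(r-(s+1)) = (p:ℤ)^(2*r-(s+1)-1) := by
        rw [← pow_add]; congr 1; omega
      linear_combination ih' + 2*e1 - 2*e2 + 2*(p:ℤ)^(2*r-s-1) - 2*(p:ℤ)^(2*r-s-1)

lemma arith_nat (p : ℕ) (hp2 : 2 ≤ p) (s : ℕ) (hs : 1 ≤ s) (r : ℕ) (hr : 2*s < r) :
    (∑ j ∈ Finset.range (2*s+1), (p^(r-j) - p^(r-j-1)) * (p^j * p^(r-(j+1)/2)))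
      = p^(2*r) + p^(2*r-1) - 2*p^(2*r-s-1) := by
  have step : ∀ j ∈ Finset.range (2*s+1),
      (p^(r-j) - p^(r-j-1)) * (p^j * p^(r-(j+1)/2))
        = (p^r - p^(r-1)) * p^(r-(j+1)/2) := by
    intro j hj
    rw [Finset.mem_range] at hj
    have hjr : j + 1 ≤ r := by omega
    have h1 : p^(r-j) * p^j = p^r := by rw [← pow_add]; congr 1; omega
    have h2 : p^(r-j-1) * p^j = p^(r-1) := by rw [← pow_add]; congr 1; omega
    rw [← mul_assoc, Nat.sub_mul, h1, h2, Nat.sub_mul]  -- careful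
  rw [Finset.sum_congr rfl step, ← Finset.mul_sum]
  have hle1 : p^(r-1) ≤ p^r := Nat.pow_le_pow_right (by omega) (by omega)
  have hle2 : 2*p^(2*r-s-1) ≤ p^(2*r) + p^(2*r-1) := by
    have h3 : 2*p^(2*r-s-1) ≤ p * p^(2*r-s-1) := Nat.mul_le_mul_right _ hp2
    have h4 : p * p^(2*r-s-1) = p^(2*r-s) := by rw [← pow_succ']; congr 1; omega
    have h5 : p^(2*r-s) ≤ p^(2*r-1) := Nat.pow_le_pow_right (by omega) (by omega)
    omega
  zify [hle1, hle2]
  push_cast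
  exact arith_int p hp2 s hs r hr

end arith

theorem stmt_10 (p : ℕ) [Fact p.Prime] (hp : Odd p) (r l : ℕ) (hl : 2 ≤ l) (hlr : l < r)
    (hleven : Even l) (t : ℤ)
    (hdvd : (p : ℤ) ^ l ∣ t ^ 2 - 4) (hndvd : ¬ (p : ℤ) ^ (l + 1) ∣ t ^ 2 - 4)
    (hres : legendreSym p ((t ^ 2 - 4) / (p : ℤ) ^ l) = -1) :
    Nat.card {γ : Matrix.SpecialLinearGroup (Fin 2) (ZMod (p ^ r)) //
        Matrix.trace (γ : Matrix (Fin 2) (Fin 2) (ZMod (p ^ r))) = (t : ZMod (p ^ r))}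
      = p ^ (2 * r) + p ^ (2 * r - 1) - 2 * p ^ (2 * r - l / 2 - 1) := by
  haveI : NeZero (p ^ r) := ⟨pow_ne_zero r (Fact.out : p.Prime).pos.ne'⟩
  have hdvd' : (p:ℤ)^l ∣ t^2-4 := hdvd
  set m : ZMod (p^r) → ZMod (p^r) := fun a => a*((t : ZMod (p^r))-a) - 1 with hm
  -- Step 1: reduce to counting triples
  rw [sl2_count (p^r) ((t : ZMod (p^r)))]
  -- Step 2: iterated sum
  have hA : (univ.filter (fun x : ZMod (p^r) × ZMod (p^r) × ZMod (p^r) =>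
        x.2.1 * x.2.2 = x.1 * ((t : ZMod (p^r)) - x.1) - 1)).card
      = ∑ a : ZMod (p^r), ∑ b : ZMod (p^r),
          (univ.filter fun c => b*c = m a).card := by
    rw [Finset.card_filter, ← Finset.univ_product_univ, Finset.sum_product]
    apply Finset.sum_congr rfl
    intro a _
    rw [← Finset.univ_product_univ, Finset.sum_product]
    apply Finset.sum_congr rfl
    intro b _
    rw [Finset.card_filter]
  rw [hA]
  -- Step 3: inner counts
  have hB : ∀ a b : ZMod (p^r), (univ.filter fun c => b*c = m a).card
      = if b ∣ m a then (univ.filter fun c => b*c = 0).card else 0 :=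
    fun a b => count_solutions b (m a)
  -- define H
  set H : ℕ → ℕ := fun j => if j ≤ l then p^(r-(j+1)/2) * p^j else 0 with hH
  have hC : ∀ b : ZMod (p^r),
      (∑ a : ZMod (p^r), (univ.filter fun c => b*c = m a).card) = H (jv p r b) := by
    intro b
    have hsum : (∑ a : ZMod (p^r), (univ.filter fun c => b*c = m a).card)
        = (univ.filter fun a => b ∣ m a).card * (univ.filter fun c => b*c = 0).card := by
      calc (∑ a : ZMod (p^r), (univ.filter fun c => b*c = m a).card)
          = ∑ a : ZMod (p^r), (if b ∣ m a then (univ.filter fun c => b*c = 0).card else 0) :=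
            Finset.sum_congr rfl (fun a _ => hB a b)
        _ = ∑ a ∈ (univ.filter fun a => b ∣ m a), (univ.filter fun c => b*c = 0).card := by
            rw [Finset.sum_filter]
        _ = _ := by rw [Finset.sum_const, smul_eq_mul]
    rw [hsum]
    rcases eq_or_ne b 0 with rfl | hb
    · have hjv0 : jv p r (0 : ZMod (p^r)) = r := if_pos rfl
      have hHr : H r = 0 := by rw [hH]; simp only; rw [if_neg (by omega)]
      rw [hjv0, hHr]
      have hempty : (univ.filter fun a => (0 : ZMod (p^r)) ∣ m a) = ∅ := by
        rw [Finset.filter_eq_empty_iff]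
        intro a _
        rw [zero_dvd_iff]
        intro hma
        have h1 : (p:ZMod (p^r))^(l+1) ∣ m a := by rw [hma]; exact dvd_zero _
        have h2 := (pointwise hp (l+1) (by omega) a).mp h1
        exact core2 hleven hdvd' hndvd hres _ h2
      rw [hempty]
      simp
    · obtain ⟨hlt, u, hu⟩ := jv_spec b hb
      set j := jv p r b with hj
      have hK : (univ.filter fun c => b*c = 0).card = p^j := by
        have heq : (univ.filter fun c => b*c = 0)
            = (univ.filter fun c : ZMod (p^r) => (p:ZMod (p^r))^(r-j) ∣ c) := by
          ext c
          simp only [mem_filter, mem_univ, true_and]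
          rw [hu, mul_assoc, mul_pow_eq_zero_iff j hlt.le ((u : ZMod (p^r)) * c)]
          exact Units.dvd_mul_left
        rw [heq, count_dvd (r-j) (Nat.sub_le r j), Nat.sub_sub_self hlt.le]
      have hdv : ∀ a, (b ∣ m a ↔ (p:ZMod (p^r))^j ∣ m a) := by
        intro a
        rw [hu]
        exact Units.mul_right_dvd
      have hfilter : (univ.filter fun a => b ∣ m a)
          = (univ.filter fun a => (p:ZMod (p^r))^j ∣ m a) := by
        ext a; simp only [mem_filter, mem_univ, true_and]; exact hdv a
      rw [hK, hfilter]
      by_cases hjl : j ≤ l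
      · rw [hH]
        simp only
        rw [if_pos hjl]
        rw [count_a_le hp hdvd' hlr j hjl]
      · rw [hH]
        simp only
        rw [if_neg hjl]
        rw [count_a_gt hp hleven hdvd' hndvd hres hlr j (by omega), zero_mul]
  rw [Finset.sum_comm, Finset.sum_congr rfl (fun b _ => hC b)]
  -- Step 4: fiberwise
  have hD : (∑ b : ZMod (p^r), H (jv p r b))
      = ∑ j ∈ Finset.range (r+1), (univ.filter fun b : ZMod (p^r) => jv p r b = j).card * H j := by
    rw [← Finset.sum_fiberwise_of_maps_to (g := jv p r) (t := Finset.range (r+1))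
      (fun b _ => Finset.mem_range.mpr (Nat.lt_succ_of_le (jv_le b)))]
    apply Finset.sum_congr rfl
    intro j _
    have : ∀ b ∈ (univ.filter fun b : ZMod (p^r) => jv p r b = j), H (jv p r b) = H j := by
      intro b hb
      rw [mem_filter] at hb
      rw [hb.2]
    rw [Finset.sum_congr rfl this, Finset.sum_const, smul_eq_mul]
  rw [hD]
  -- Step 5: restrict to j ≤ l
  have hE : (∑ j ∈ Finset.range (r+1), (univ.filter fun b : ZMod (p^r) => jv p r b = j).card * H j)
      = ∑ j ∈ Finset.range (l+1), (p^(r-j) - p^(r-j-1)) * (p^j * p^(r-(j+1)/2)) := by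
    rw [← Finset.sum_subset (Finset.range_subset_range.mpr (by omega : l+1 ≤ r+1))]
    · apply Finset.sum_congr rfl
      intro j hjmem
      rw [Finset.mem_range] at hjmem
      have hjl : j ≤ l := by omega
      rw [count_jv j (by omega), hH]
      simp only
      rw [if_pos hjl]
      ring
    · intro j _ hj2
      rw [Finset.mem_range] at hj2
      have : ¬ j ≤ l := by omega
      rw [hH]
      simp only
      rw [if_neg this, mul_zero]
  rw [hE]
  -- Step 6: arithmetic
  obtain ⟨s, hs⟩ := hleven
  have hsl : l = 2*s := by omega
  have hls : l / 2 = s := by omega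
  rw [hls, hsl]
  exact arith_nat p (Fact.out : p.Prime).two_le s (by omega) r (by omega)
end

section
/- Let N_j → ∞ and for each i = 1,…,q let f_i : ℕ → ℂ be a q-limit periodic function approximated in the seminorm ‖f‖_q = (limsup_{x→∞} (1/x) Σ_{n ≤ x} |f(n)|^q)^{1/q} by N_j-periodic functions f_{ij} (i.e., ‖f_i − f_{ij}‖_q → 0 as j → ∞). Then lim_{x→∞} (1/x) Σ_{1 ≤ t ≤ x} f_1(t)⋯f_q(t) exists and equals lim_{j→∞} N_j^{q−1} Σ_{m ∈ Z/N_jZ} F_{1j}(m)⋯F_{qj}(m), where F_{ij}(m) = f_{ij}(m)/N_j. -/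
open Filter

/-- The seminorm `‖f‖_q = (limsup_{x→∞} (1/x) ∑_{n ≤ x} |f(n)|^q)^{1/q}`. -/
noncomputable def semiNormQ (q : ℕ) (f : ℕ → ℂ) : ℝ :=
  (Filter.atTop.limsup fun x : ℕ =>
      (1 / (x : ℝ)) * ∑ n ∈ Finset.Icc 1 x, ‖f n‖ ^ q) ^ ((1 : ℝ) / q)

/-!
Telescoping `∏ᵢ fᵢ - ∏ᵢ fᵢⱼ` and applying Hölder's inequality to products of `q` factors bounds
the Cesàro mean at `x` of the difference by
`∑ᵢ ‖fᵢ - fᵢⱼ‖_{q,x} ∏_{k ≠ i} (‖f_k‖_{q,x}^q + ‖f_kj‖_{q,x}^q)^{1/q}`, where `‖·‖_{q,x}` is `‖·‖_q`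
with the limsup replaced by the value at `x`. The product is bounded for large `x` uniformly in `j`,
so for large `j` the means of `∏ᵢ fᵢ` stay eventually close to the means of the `N_j`-periodic
products `∏ᵢ fᵢⱼ`, which converge to `N_j⁻¹ ∑_{m < N_j} ∏ᵢ fᵢⱼ(m)`. These limits therefore form a
Cauchy sequence, and its limit is also the limit of the means of `∏ᵢ fᵢ`.
-/

open Finset Function MeasureTheory Topology
open scoped ENNReal

theorem ENNReal.mul_sum_mul_prod_rpow_le {α ι : Type*} (s : Finset α) (c : ℝ≥0∞)
    (t : Finset ι) (g : α → ℝ≥0∞) (f : ι → α → ℝ≥0∞) {p₀ : ℝ} {p : ι → ℝ}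
    (hp : p₀ + ∑ i ∈ t, p i = 1) (hp₀ : 0 ≤ p₀) (hp_nonneg : ∀ i ∈ t, 0 ≤ p i) :
    c * ∑ a ∈ s, g a ^ p₀ * ∏ i ∈ t, f i a ^ p i ≤
      (c * ∑ a ∈ s, g a) ^ p₀ * ∏ i ∈ t, (c * ∑ a ∈ s, f i a) ^ p i := by
  let _ : MeasurableSpace α := ⊤
  have hμ (F : α → ℝ≥0∞) : ∫⁻ a, F a ∂(c • ∑ a ∈ s, Measure.dirac a) = c * ∑ a ∈ s, F a := by
    simp [lintegral_finsetSum_measure, lintegral_dirac' _ measurable_from_top]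
  simpa only [hμ] using lintegral_mul_prod_norm_pow_le (μ := c • ∑ a ∈ s, Measure.dirac a) t
    measurable_from_top.aemeasurable (fun i _ => measurable_from_top.aemeasurable) p₀ hp hp₀
    hp_nonneg

theorem Real.mul_sum_mul_prod_le_Lp_mul_prod_Lp {α ι : Type*} (s : Finset α) (t : Finset ι)
    {q : ℕ} (hq : #t + 1 = q) {c : ℝ} (hc : 0 ≤ c) {u : α → ℝ} {v : ι → α → ℝ}
    (hu : ∀ a, 0 ≤ u a) (hv : ∀ i a, 0 ≤ v i a) :
    c * ∑ a ∈ s, u a * ∏ i ∈ t, v i a ≤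
      (c * ∑ a ∈ s, u a ^ q) ^ (q : ℝ)⁻¹ * ∏ i ∈ t, (c * ∑ a ∈ s, v i a ^ q) ^ (q : ℝ)⁻¹ := by
  have hq₀ : q ≠ 0 := by omega
  have hmean {w : α → ℝ} (hw : ∀ a, 0 ≤ w a) : 0 ≤ c * ∑ a ∈ s, w a ^ q :=
    mul_nonneg hc (sum_nonneg fun a _ => pow_nonneg (hw a) q)
  have hofReal {w : α → ℝ} (hw : ∀ a, 0 ≤ w a) :
      ENNReal.ofReal ((c * ∑ a ∈ s, w a ^ q) ^ (q : ℝ)⁻¹) =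
        (ENNReal.ofReal c * ∑ a ∈ s, ENNReal.ofReal (w a) ^ q) ^ (q : ℝ)⁻¹ := by
    rw [← ENNReal.ofReal_rpow_of_nonneg (hmean hw) (by positivity), ENNReal.ofReal_mul hc,
      ENNReal.ofReal_sum_of_nonneg fun a _ => pow_nonneg (hw a) q]
    simp only [ENNReal.ofReal_pow (hw _)]
  have key := ENNReal.mul_sum_mul_prod_rpow_le s (ENNReal.ofReal c) t
    (fun a => ENNReal.ofReal (u a) ^ q) (fun i a => ENNReal.ofReal (v i a) ^ q)
    (p₀ := (q : ℝ)⁻¹) (p := fun _ => (q : ℝ)⁻¹) (by simp [← hq]; field_simp; ring)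
    (by positivity) (fun _ _ => by positivity)
  simp only [ENNReal.pow_rpow_inv_natCast hq₀] at key
  rw [← ENNReal.ofReal_le_ofReal_iff (mul_nonneg (Real.rpow_nonneg (hmean hu) _)
    (prod_nonneg fun i _ => Real.rpow_nonneg (hmean (hv i)) _))]
  convert key using 1
  · rw [ENNReal.ofReal_mul hc, ENNReal.ofReal_sum_of_nonneg fun a _ =>
      mul_nonneg (hu a) (prod_nonneg fun i _ => hv i a)]
    simp only [ENNReal.ofReal_mul (hu _), ENNReal.ofReal_prod_of_nonneg fun i _ => hv i _]
  · rw [ENNReal.ofReal_mul (Real.rpow_nonneg (hmean hu) _),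
      ENNReal.ofReal_prod_of_nonneg fun i _ => Real.rpow_nonneg (hmean (hv i)) _, hofReal hu]
    simp only [hofReal (hv _)]

theorem norm_prod_sub_prod_le {ι : Type*} [DecidableEq ι] (s : Finset ι) (a b : ι → ℂ) :
    ‖∏ i ∈ s, a i - ∏ i ∈ s, b i‖ ≤
      ∑ i ∈ s, ‖a i - b i‖ * ∏ k ∈ s.erase i, max ‖a k‖ ‖b k‖ := by
  induction s using Finset.induction_on with
  | empty => simp
  | @insert j s hj ih =>
    have hmax (k : ι) : 0 ≤ max ‖a k‖ ‖b k‖ := (norm_nonneg _).trans (le_max_left _ _)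
    rw [prod_insert hj, prod_insert hj, sum_insert hj, erase_insert hj,
      show a j * ∏ i ∈ s, a i - b j * ∏ i ∈ s, b i
        = (a j - b j) * ∏ i ∈ s, a i + b j * (∏ i ∈ s, a i - ∏ i ∈ s, b i) by ring]
    refine (norm_add_le _ _).trans (add_le_add ?_ ?_)
    · rw [norm_mul, norm_prod]
      gcongr with k
      exact le_max_left _ _
    · rw [norm_mul]
      refine (mul_le_mul (le_max_right ‖a j‖ ‖b j‖) ih (norm_nonneg _) (hmax j)).trans_eq ?_
      rw [mul_sum]
      refine sum_congr rfl fun i hi => ?_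
      rw [erase_insert_of_ne (ne_of_mem_of_not_mem hi hj).symm,
        prod_insert fun h => hj (mem_of_mem_erase h), mul_left_comm]

theorem exists_tendsto_of_eventually_dist_le {α E : Type*} [PseudoMetricSpace E] [CompleteSpace E]
    {l : Filter α} [l.NeBot] {u : α → E} {v : ℕ → α → E} {m : ℕ → E}
    (hv : ∀ j, Tendsto (v j) l (𝓝 (m j)))
    (huv : ∀ ε > 0, ∀ᶠ j in atTop, ∀ᶠ x in l, dist (u x) (v j x) ≤ ε) :
    ∃ L, Tendsto u l (𝓝 L) ∧ Tendsto m atTop (𝓝 L) := by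
  have hm : CauchySeq m := by
    refine Metric.cauchySeq_iff'.2 fun ε hε => ?_
    obtain ⟨j₀, hj₀⟩ := eventually_atTop.1 (huv (ε / 3) (by positivity))
    refine ⟨j₀, fun j hj => ?_⟩
    have hclose : ∀ᶠ x in l, dist (v j x) (v j₀ x) ≤ 2 * (ε / 3) := by
      filter_upwards [hj₀ j hj, hj₀ j₀ le_rfl] with x h h₀
      linarith [dist_triangle_left (v j x) (v j₀ x) (u x)]
    linarith [le_of_tendsto ((hv j).dist (hv j₀)) hclose]
  obtain ⟨L, hL⟩ := cauchySeq_tendsto_of_complete hm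
  refine ⟨L, Metric.tendsto_nhds.2 fun ε hε => ?_, hL⟩
  obtain ⟨j, hj, hjL⟩ :=
    ((huv (ε / 3) (by positivity)).and (Metric.tendsto_nhds.1 hL (ε / 3) (by positivity))).exists
  filter_upwards [hj, Metric.tendsto_nhds.1 (hv j) (ε / 3) (by positivity)] with x h₁ h₂
  linarith [dist_triangle4 (u x) (v j x) (m j) L]

theorem pow_sub_one_mul_sum_prod_div {α ι K : Type*} [Fintype ι] [Field K] {q : ℕ} (hq : q ≠ 0)
    (hι : Fintype.card ι = q) {N : K} (hN : N ≠ 0) (s : Finset α) (a : ι → α → K) :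
    N ^ (q - 1) * ∑ m ∈ s, ∏ i, a i m / N = N⁻¹ * ∑ m ∈ s, ∏ i, a i m := by
  obtain ⟨p, rfl⟩ := Nat.exists_eq_succ_of_ne_zero hq
  simp only [prod_div_distrib, prod_const, card_univ, hι, ← sum_div, Nat.succ_sub_one, pow_succ]
  field_simp

theorem Function.Periodic.sum_Icc_add_period {M : Type*} [AddCommMonoid M] {g : ℕ → M} {N : ℕ}
    (hg : Periodic g N) (x : ℕ) :
    ∑ t ∈ Icc 1 (x + N), g t = ∑ t ∈ Icc 1 x, g t + ∑ m ∈ range N, g m := by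
  induction x with
  | zero =>
    rcases N with _ | n
    · simp
    rw [zero_add, sum_Icc_succ_top (by omega), range_eq_Ico,
      sum_eq_sum_Ico_succ_bot (by omega : 0 < n + 1), zero_add, Ico_add_one_right_eq_Icc,
      show g (n + 1) = g 0 by simpa using hg 0]
    simp [add_comm]
  | succ x ih =>
    rw [show x + 1 + N = x + N + 1 by omega, sum_Icc_succ_top (by omega), ih,
      sum_Icc_succ_top (by omega), show x + N + 1 = x + 1 + N by omega, hg]
    abel

section cesaroMean

variable {𝕜 : Type*} [RCLike 𝕜]

noncomputable def cesaroMean (g : ℕ → 𝕜) (x : ℕ) : 𝕜 := (x : 𝕜)⁻¹ * ∑ t ∈ Icc 1 x, g t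

theorem Function.Periodic.tendsto_cesaroMean {g : ℕ → 𝕜} {N : ℕ} (hg : Periodic g N) (hN : 0 < N) :
    Tendsto (cesaroMean g) atTop (𝓝 ((N : 𝕜)⁻¹ * ∑ m ∈ range N, g m)) := by
  set M := (N : 𝕜)⁻¹ * ∑ m ∈ range N, g m
  set T : ℕ → 𝕜 := fun x => ∑ t ∈ Icc 1 x, g t - x * M
  have hN' : (N : 𝕜) ≠ 0 := Nat.cast_ne_zero.mpr hN.ne'
  have hT : Periodic T N := fun x => by
    simp only [T, M, hg.sum_Icc_add_period, Nat.cast_add]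
    field_simp
    ring
  have hTbdd (x : ℕ) : ‖T x‖ ≤ ∑ m ∈ range N, ‖T m‖ := by
    rw [← hT.map_mod_nat x]
    exact single_le_sum (fun m _ => norm_nonneg (T m)) (mem_range.mpr (x.mod_lt hN))
  have hcesaro : ∀ᶠ x in atTop, cesaroMean g x = M + (x : 𝕜)⁻¹ * T x := by
    filter_upwards [eventually_ne_atTop 0] with x hx
    have hx' : (x : 𝕜) ≠ 0 := Nat.cast_ne_zero.mpr hx
    simp only [cesaroMean, T]
    field_simp
    ring
  have hT0 : Tendsto (fun x : ℕ => (x : 𝕜)⁻¹ * T x) atTop (𝓝 0) := by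
    refine squeeze_zero_norm (fun x => ?_)
      (tendsto_const_div_atTop_nhds_zero_nat (∑ m ∈ range N, ‖T m‖))
    rw [norm_mul, norm_inv, RCLike.norm_natCast, ← div_eq_inv_mul]
    exact div_le_div_of_nonneg_right (hTbdd x) (Nat.cast_nonneg x)
  simpa using (tendsto_congr' hcesaro).2 (hT0.const_add M)

end cesaroMean

noncomputable def powMean (q : ℕ) (g : ℕ → ℂ) (x : ℕ) : ℝ :=
  (1 / (x : ℝ)) * ∑ n ∈ Icc 1 x, ‖g n‖ ^ q

section powMean

variable {q : ℕ} {f g : ℕ → ℂ}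

theorem powMean_nonneg (q : ℕ) (g : ℕ → ℂ) (x : ℕ) : 0 ≤ powMean q g x := by
  unfold powMean
  positivity

theorem semiNormQ_eq (q : ℕ) (g : ℕ → ℂ) :
    semiNormQ q g = limsup (powMean q g) atTop ^ (q : ℝ)⁻¹ := by
  rw [semiNormQ, one_div]
  rfl

theorem powMean_eq_cesaroMean (q : ℕ) (g : ℕ → ℂ) :
    powMean q g = cesaroMean fun n => (‖g n‖ ^ q : ℝ) := by
  ext x
  simp [powMean, cesaroMean]

theorem Function.Periodic.isBoundedUnder_powMean {N : ℕ} (hg : Periodic g N) (hN : 0 < N) :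
    IsBoundedUnder (· ≤ ·) atTop (powMean q g) := by
  rw [powMean_eq_cesaroMean]
  exact (Periodic.tendsto_cesaroMean (hg.comp fun z => ‖z‖ ^ q) hN).isBoundedUnder_le

theorem powMean_sub_le (q : ℕ) (f g : ℕ → ℂ) (x : ℕ) :
    powMean q (fun n => f n - g n) x ≤ 2 ^ (q - 1) * (powMean q f x + powMean q g x) := by
  unfold powMean
  calc (1 / (x : ℝ)) * ∑ n ∈ Icc 1 x, ‖f n - g n‖ ^ q
      ≤ (1 / (x : ℝ)) * ∑ n ∈ Icc 1 x, 2 ^ (q - 1) * (‖f n‖ ^ q + ‖g n‖ ^ q) := by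
        gcongr with n
        exact (pow_le_pow_left₀ (norm_nonneg _) (norm_sub_le _ _) q).trans
          (add_pow_le (norm_nonneg _) (norm_nonneg _) q)
    _ = _ := by rw [← mul_sum, sum_add_distrib]; ring

theorem isBoundedUnder_powMean_sub (hf : IsBoundedUnder (· ≤ ·) atTop (powMean q f))
    (hg : IsBoundedUnder (· ≤ ·) atTop (powMean q g)) :
    IsBoundedUnder (· ≤ ·) atTop (powMean q fun n => f n - g n) := by
  obtain ⟨a, ha⟩ := hf.eventually_le
  obtain ⟨b, hb⟩ := hg.eventually_le
  refine isBoundedUnder_of_eventually_le (a := 2 ^ (q - 1) * (a + b)) ?_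
  filter_upwards [ha, hb] with x hxa hxb
  exact (powMean_sub_le q f g x).trans (by gcongr)

theorem eventually_powMean_lt_rpow (hq : q ≠ 0) (hg : IsBoundedUnder (· ≤ ·) atTop (powMean q g))
    {c : ℝ} (h : semiNormQ q g < c) : ∀ᶠ x in atTop, powMean q g x < c ^ (q : ℝ) := by
  have hL : 0 ≤ limsup (powMean q g) atTop :=
    le_limsup_of_frequently_le (Frequently.of_forall (powMean_nonneg q g)) hg
  rw [semiNormQ_eq] at h
  have hc : 0 ≤ c := (Real.rpow_nonneg hL _).trans h.le
  exact eventually_lt_of_limsup_lt ((Real.rpow_inv_lt_iff_of_pos hL hc (by positivity)).1 h) hg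

end powMean

theorem norm_cesaroMean_prod_sub_le {ι : Type*} [Fintype ι] [DecidableEq ι] {q : ℕ}
    (hι : Fintype.card ι = q) (F G : ι → ℕ → ℂ) (x : ℕ) :
    ‖cesaroMean (fun t => ∏ i, F i t) x - cesaroMean (fun t => ∏ i, G i t) x‖ ≤
      ∑ i, powMean q (fun n => F i n - G i n) x ^ (q : ℝ)⁻¹ *
        ∏ k ∈ univ.erase i, (powMean q (F k) x + powMean q (G k) x) ^ (q : ℝ)⁻¹ := by
  set m : ι → ℕ → ℝ := fun k n => max ‖F k n‖ ‖G k n‖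
  have hm (k : ι) (n : ℕ) : 0 ≤ m k n := (norm_nonneg _).trans (le_max_left _ _)
  have hm_mean_nonneg (k : ι) : 0 ≤ (1 / (x : ℝ)) * ∑ n ∈ Icc 1 x, m k n ^ q := by
    have := hm k
    positivity
  have hm_mean (k : ι) :
      (1 / (x : ℝ)) * ∑ n ∈ Icc 1 x, m k n ^ q ≤ powMean q (F k) x + powMean q (G k) x := by
    simp only [powMean, ← mul_add, ← sum_add_distrib]
    gcongr with n
    rcases le_total ‖F k n‖ ‖G k n‖ with h | h
    · rw [show m k n = ‖G k n‖ from max_eq_right h]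
      exact le_add_of_nonneg_left (by positivity)
    · rw [show m k n = ‖F k n‖ from max_eq_left h]
      exact le_add_of_nonneg_right (by positivity)
  calc ‖cesaroMean (fun t => ∏ i, F i t) x - cesaroMean (fun t => ∏ i, G i t) x‖
      = ‖(x : ℂ)⁻¹ * ∑ t ∈ Icc 1 x, (∏ i, F i t - ∏ i, G i t)‖ := by
        rw [cesaroMean, cesaroMean, ← mul_sub, ← sum_sub_distrib]
    _ ≤ (1 / (x : ℝ)) * ∑ t ∈ Icc 1 x, ‖∏ i, F i t - ∏ i, G i t‖ := by
        rw [norm_mul, norm_inv, Complex.norm_natCast, one_div]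
        gcongr
        exact norm_sum_le _ _
    _ ≤ (1 / (x : ℝ)) * ∑ t ∈ Icc 1 x, ∑ i, ‖F i t - G i t‖ * ∏ k ∈ univ.erase i, m k t := by
        gcongr with t
        exact norm_prod_sub_prod_le _ _ _
    _ = ∑ i, (1 / (x : ℝ)) * ∑ t ∈ Icc 1 x, ‖F i t - G i t‖ * ∏ k ∈ univ.erase i, m k t := by
        rw [sum_comm, mul_sum]
    _ ≤ _ := by
        refine sum_le_sum fun i _ =>
          (Real.mul_sum_mul_prod_le_Lp_mul_prod_Lp (Icc 1 x) (univ.erase i)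
            (by rw [card_erase_add_one (mem_univ i), card_univ, hι]) (by positivity)
            (fun n => norm_nonneg _) hm).trans ?_
        exact mul_le_mul_of_nonneg_left
          (prod_le_prod (fun k _ => Real.rpow_nonneg (hm_mean_nonneg k) _)
            fun k _ => Real.rpow_le_rpow (hm_mean_nonneg k) (hm_mean k) (by positivity))
          (Real.rpow_nonneg (powMean_nonneg _ _ x) _)

theorem eventually_dist_cesaroMean_prod_le {ι : Type*} [Fintype ι] {q : ℕ} (hq : q ≠ 0)
    (hι : Fintype.card ι = q) {f : ι → ℕ → ℂ} {g : ι → ℕ → ℕ → ℂ}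
    (hf : ∀ i, IsBoundedUnder (· ≤ ·) atTop (powMean q (f i)))
    (hg : ∀ i j, IsBoundedUnder (· ≤ ·) atTop (powMean q (g i j)))
    (hgB : ∀ i, ∃ B : ℝ, ∀ j, semiNormQ q (g i j) ≤ B)
    (hfg : ∀ i, Tendsto (fun j => semiNormQ q (fun n => f i n - g i j n)) atTop (𝓝 0)) :
    ∀ ε > 0, ∀ᶠ j in atTop, ∀ᶠ x in atTop,
      dist (cesaroMean (fun t => ∏ i, f i t) x) (cesaroMean (fun t => ∏ i, g i j t) x) ≤ ε := by
  classical
  intro ε hε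
  choose U hU using fun i => (hf i).eventually_le
  choose B hB using hgB
  -- `C` does not depend on `j`: this is where the uniform bound `hgB` enters.
  set C : ι → ℝ := fun k => U k + (B k + 1) ^ (q : ℝ)
  have hC (j : ℕ) : ∀ᶠ x in atTop, ∀ k, powMean q (f k) x + powMean q (g k j) x ≤ C k :=
    eventually_all.2 fun k => by
      filter_upwards [hU k, eventually_powMean_lt_rpow hq (hg k j)
        ((hB k j).trans_lt (lt_add_one _))] with x hfx hgx
      exact add_le_add hfx hgx.le
  obtain ⟨δ, hδ, hδε⟩ := exists_pos_mul_lt hε (∑ i, ∏ k ∈ univ.erase i, C k ^ (q : ℝ)⁻¹)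
  have hsmall : ∀ᶠ j in atTop, ∀ i, semiNormQ q (fun n => f i n - g i j n) < δ :=
    eventually_all.2 fun i => (hfg i).eventually (gt_mem_nhds hδ)
  filter_upwards [hsmall] with j hj
  have hd : ∀ᶠ x in atTop, ∀ i, powMean q (fun n => f i n - g i j n) x ^ (q : ℝ)⁻¹ ≤ δ :=
    eventually_all.2 fun i =>
      (eventually_powMean_lt_rpow hq (isBoundedUnder_powMean_sub (hf i) (hg i j)) (hj i)).mono
        fun x hx => ((Real.rpow_inv_lt_iff_of_pos (powMean_nonneg _ _ x) hδ.le
          (by positivity)).2 hx).le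
  filter_upwards [hC j, hd] with x hCx hdx
  rw [dist_eq_norm]
  refine (norm_cesaroMean_prod_sub_le hι _ _ x).trans (le_trans ?_ hδε.le)
  have hP (k : ι) : 0 ≤ powMean q (f k) x + powMean q (g k j) x :=
    add_nonneg (powMean_nonneg _ _ x) (powMean_nonneg _ _ x)
  rw [sum_mul]
  refine sum_le_sum fun i _ => ?_
  rw [mul_comm _ δ]
  exact mul_le_mul (hdx i) (prod_le_prod (fun k _ => Real.rpow_nonneg (hP k) _)
    fun k _ => Real.rpow_le_rpow (hP k) (hCx k) (by positivity))
    (prod_nonneg fun k _ => Real.rpow_nonneg (hP k) _) hδ.le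

theorem stmt_19_general (q : ℕ) (hq : 1 ≤ q) (f : Fin q → ℕ → ℂ)
    (N : ℕ → ℕ) (hNpos : ∀ j, 0 < N j)
    (fa : Fin q → ℕ → ℕ → ℂ)
    (hper : ∀ i j n, fa i j (n + N j) = fa i j n)
    (hfin : ∀ i, IsBoundedUnder (· ≤ ·) atTop
      (fun x : ℕ => (1 / (x : ℝ)) * ∑ n ∈ Finset.Icc 1 x, ‖f i n‖ ^ q))
    (hbdd : ∀ i, ∃ B : ℝ, ∀ j, semiNormQ q (fa i j) ≤ B)
    (happrox : ∀ i, Tendsto (fun j => semiNormQ q (fun n => f i n - fa i j n)) atTop (nhds 0)) :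
    ∃ L : ℂ,
      Tendsto (fun x : ℕ => ((x : ℂ))⁻¹ * ∑ t ∈ Finset.Icc 1 x, ∏ i, f i t)
        atTop (nhds L) ∧
      Tendsto (fun j => ((N j : ℂ)) ^ (q - 1) *
          ∑ m ∈ Finset.range (N j), ∏ i, (fa i j m / (N j : ℂ)))
        atTop (nhds L) := by
  have hq₀ : q ≠ 0 := Nat.one_le_iff_ne_zero.mp hq
  obtain ⟨L, hfL, hmL⟩ := exists_tendsto_of_eventually_dist_le
    (fun j => Periodic.tendsto_cesaroMean (fun n => prod_congr rfl fun i _ => hper i j n)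
      (hNpos j))
    (eventually_dist_cesaroMean_prod_le hq₀ (Fintype.card_fin q) hfin
      (fun i j => Periodic.isBoundedUnder_powMean (hper i j) (hNpos j)) hbdd happrox)
  refine ⟨L, hfL, hmL.congr fun j => ?_⟩
  rw [pow_sub_one_mul_sum_prod_div hq₀ (Fintype.card_fin q) (Nat.cast_ne_zero.2 (hNpos j).ne')]

theorem stmt_19 (q : ℕ) (hq : 1 ≤ q) (f : Fin q → ℕ → ℂ)
    (N : ℕ → ℕ) (hNpos : ∀ j, 0 < N j) (hN : Tendsto N atTop atTop)
    (fa : Fin q → ℕ → ℕ → ℂ)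
    (hper : ∀ i j n, fa i j (n + N j) = fa i j n)
    (hfin : ∀ i, IsBoundedUnder (· ≤ ·) atTop
      (fun x : ℕ => (1 / (x : ℝ)) * ∑ n ∈ Finset.Icc 1 x, ‖f i n‖ ^ q))
    (hbdd : ∀ i, ∃ B : ℝ, ∀ j, semiNormQ q (fa i j) ≤ B)
    (happrox : ∀ i, Tendsto (fun j => semiNormQ q (fun n => f i n - fa i j n)) atTop (nhds 0)) :
    ∃ L : ℂ,
      Tendsto (fun x : ℕ => ((x : ℂ))⁻¹ * ∑ t ∈ Finset.Icc 1 x, ∏ i, f i t)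
        atTop (nhds L) ∧
      Tendsto (fun j => ((N j : ℂ)) ^ (q - 1) *
          ∑ m ∈ Finset.range (N j), ∏ i, (fa i j m / (N j : ℂ)))
        atTop (nhds L) :=
  stmt_19_general q hq f N hNpos fa hper hfin hbdd happrox
end
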